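/- arXiv:2401.17475 — 8 statements merged into one kernel-verified Lean document; each statement's English description precedes it below -/
import Mathlib

section
/- Let k ≥ 1 and let n be an integer such that n/2 + k is an integer and n is sufficiently large. Let D be the digraph which is the union of two complete digraphs Q_1 and Q_2, each on n/2 + k vertices, with |V(Q_1) ∩ V(Q_2)| = 2k (so |V(D)| = n). Then δ⁰(D) = n/2 + k − 1. Moreover, writing V(Q_1) ∩ V(Q_2) = {x_1, …, x_k, y_1, …, y_k} and letting H be the digraph consisting of the k pairwise disjoint arcs x_1y_1, …, x_ky_k, the subdigraph of D induced by (V(D) ∖ V(H)) ∪ {x_1, y_1} contains no directed path from x_1 to y_1 of length greater than n/2 − k + 1; consequently D is not arbitrary Hamiltonian H-linked. Hence the minimum semi-degree bound n/2 + k in the main theorem is best possible. -/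
open scoped Classical

/-- The out-degree of a vertex `v` in the digraph with arc relation `A`. -/
noncomputable def outDeg {V : Type*} (A : V → V → Prop) (v : V) : ℕ :=
  {u | A v u}.ncard

/-- The in-degree of a vertex `v` in the digraph with arc relation `A`. -/
noncomputable def inDeg {V : Type*} (A : V → V → Prop) (v : V) : ℕ :=
  {u | A u v}.ncard

/-- `p` is a directed path from `u` to `v` in the digraph with arc relation `A`,
recorded as its list of vertices; for `u = v` it is a closed directed path. -/
def IsDipathFrom {V : Type*} (A : V → V → Prop) (u v : V) (p : List V) : Prop :=
  p.Chain' A ∧ p.head? = some u ∧ p.getLast? = some v ∧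
    (u = v → p.dropLast.Nodup) ∧ (u ≠ v → p.Nodup)

/-- The internal vertices of a path recorded as a list of vertices. -/
def listInterior {V : Type*} (p : List V) : List V := p.tail.dropLast

/-- Hamiltonian `(N H)`-subdivision for arcs `a` already mapped into `V`. -/
def IsHamSubdivision {V : Type*} (A : V → V → Prop) {k : ℕ}
    (a : Fin k → V × V) (N : Fin k → ℕ) (g : Fin k → List V) : Prop :=
  (∀ i, IsDipathFrom A (a i).1 (a i).2 (g i) ∧ (g i).length = N i + 1) ∧
  (∀ i j, i ≠ j → ∀ x ∈ listInterior (g i), x ∉ g j) ∧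
  (∀ x : V, ∃ i, x ∈ g i)

/-- Arbitrary Hamiltonian `H`-linkedness with parameters `α, β`. -/
def ArbHamHLinked {V W : Type*} [Fintype V] [Fintype W] (A : V → V → Prop)
    {k : ℕ} (a : Fin k → W × W) (α β : ℝ) : Prop :=
  ∀ f : W → V, Function.Injective f →
    ∀ N : Fin k → ℕ,
      (∀ i, 4 ≤ N i) →
      (∑ i, if (N i : ℝ) < β * Fintype.card V then (N i : ℝ) else 0) ≤ α * Fintype.card V →
      (∑ i, (N i - 1)) + Fintype.card W = Fintype.card V →
      ∃ g : Fin k → List V, IsHamSubdivision A (fun i => (f (a i).1, f (a i).2)) N g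

/-! Each vertex lies in one of the complete digraphs `Q₁, Q₂` on `n/2 + k` vertices, and a vertex
of `Q₁ \ Q₂` has no other neighbours, so `δ⁰(D) = n/2 + k - 1`. An arc joining two vertices outside
`Q₁ ∩ Q₂` never crosses between `Q₁ \ Q₂` and `Q₂ \ Q₁`, so the interior of an `x₁y₁`-path avoiding
the rest of `Q₁ ∩ Q₂` lies on one side and has at most `n/2 - k` vertices. Since `H` has `2k`
vertices, an arbitrary Hamiltonian `H`-linkage may prescribe `k - 1` arcs of length 4 and one arc
`x₁y₁` of length `n - 5k + 4`; that path must avoid the other terminals and is too long. -/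

open Filter

def twoCliqueAdj {V : Type*} (Q₁ Q₂ : Set V) (u v : V) : Prop :=
  u ≠ v ∧ ((u ∈ Q₁ ∧ v ∈ Q₁) ∨ (u ∈ Q₂ ∧ v ∈ Q₂))

section Degrees

variable {V : Type*} {A : V → V → Prop}

lemma inDeg_eq_outDeg [Std.Symm A] (v : V) : inDeg A v = outDeg A v := by
  unfold inDeg outDeg
  congr 1
  ext u
  exact ⟨Std.Symm.symm u v, Std.Symm.symm v u⟩

lemma ncard_sub_one_le_outDeg [Finite V] {Q : Set V} {v : V} (hv : v ∈ Q)
    (hQ : ∀ u ∈ Q, u ≠ v → A v u) : Q.ncard - 1 ≤ outDeg A v := by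
  rw [← Set.ncard_sdiff_singleton_of_mem hv]
  exact Set.ncard_le_ncard fun u hu => hQ u hu.1 hu.2

end Degrees

lemma List.Nodup.length_le_ncard {V : Type*} [Finite V] {t : List V} {S : Set V}
    (ht : t.Nodup) (hS : ∀ z ∈ t, z ∈ S) : t.length ≤ S.ncard := by
  classical
  rw [← List.toFinset_card_of_nodup ht, ← Set.ncard_coe_finset, List.coe_toFinset]
  exact Set.ncard_le_ncard hS

namespace IsDipathFrom

variable {V : Type*} {A : V → V → Prop} {u v : V} {p : List V}

lemma left_mem (hp : IsDipathFrom A u v p) : u ∈ p := List.mem_of_mem_head? hp.2.1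

lemma right_mem (hp : IsDipathFrom A u v p) : v ∈ p := List.mem_of_mem_getLast? hp.2.2.1

lemma eq_cons_listInterior_append (hp : IsDipathFrom A u v p) (huv : u ≠ v) :
    p = u :: (listInterior p ++ [v]) := by
  obtain ⟨t, rfl⟩ := List.head?_eq_some_iff.1 hp.2.1
  cases t with
  | nil => exact absurd (by simpa using hp.2.2.1) huv
  | cons b t =>
    have hlast : v ∈ (b :: t).getLast? := List.getLast?_cons_cons ▸ hp.2.2.1
    exact congrArg (u :: ·) (List.dropLast_append_getLast? v hlast).symm

end IsDipathFrom

lemma IsHamSubdivision.eq_endpoint_of_mem_of_eq_endpoint {V : Type*} {A : V → V → Prop}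
    {k : ℕ} {a : Fin k → V × V} {N : Fin k → ℕ} {g : Fin k → List V}
    (hg : IsHamSubdivision A a N g) {i j : Fin k} (hi : (a i).1 ≠ (a i).2) {z : V}
    (hz : z ∈ g i) (hzj : z = (a j).1 ∨ z = (a j).2) : z = (a i).1 ∨ z = (a i).2 := by
  rw [(hg.1 i).1.eq_cons_listInterior_append hi] at hz
  simp only [List.mem_cons, List.mem_append, List.not_mem_nil, or_false] at hz
  rcases hz with hz | hz | hz
  · exact .inl hz
  · obtain rfl : i = j := by
      by_contra hij
      refine hg.2.1 i j hij z hz ?_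
      rcases hzj with rfl | rfl
      exacts [(hg.1 j).1.left_mem, (hg.1 j).1.right_mem]
    exact hzj
  · exact .inr hz

namespace twoCliqueAdj

variable {V : Type*} {Q₁ Q₂ : Set V}

instance : Std.Symm (twoCliqueAdj Q₁ Q₂) :=
  ⟨fun _ _ ⟨hne, h⟩ => ⟨hne.symm, h.imp And.symm And.symm⟩⟩

lemma mem_left_iff {u v : V} (h : twoCliqueAdj Q₁ Q₂ u v) (hu : u ∉ Q₁ ∩ Q₂)
    (hv : v ∉ Q₁ ∩ Q₂) : u ∈ Q₁ ↔ v ∈ Q₁ := by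
  rcases h.2 with ⟨hu₁, hv₁⟩ | ⟨hu₂, hv₂⟩
  · exact iff_of_true hu₁ hv₁
  · exact iff_of_false (fun hu₁ => hu ⟨hu₁, hu₂⟩) (fun hv₁ => hv ⟨hv₁, hv₂⟩)

lemma min_ncard_sub_one_le_outDeg [Finite V] (hU : Q₁ ∪ Q₂ = Set.univ) (v : V) :
    min Q₁.ncard Q₂.ncard - 1 ≤ outDeg (twoCliqueAdj Q₁ Q₂) v := by
  rcases (hU ▸ Set.mem_univ v : v ∈ Q₁ ∪ Q₂) with hv | hv
  · exact (Nat.sub_le_sub_right (min_le_left _ _) 1).trans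
      (ncard_sub_one_le_outDeg hv fun u hu hne => ⟨hne.symm, .inl ⟨hv, hu⟩⟩)
  · exact (Nat.sub_le_sub_right (min_le_right _ _) 1).trans
      (ncard_sub_one_le_outDeg hv fun u hu hne => ⟨hne.symm, .inr ⟨hv, hu⟩⟩)

lemma outDeg_of_mem_diff {v : V} (hv : v ∈ Q₁ \ Q₂) :
    outDeg (twoCliqueAdj Q₁ Q₂) v = Q₁.ncard - 1 := by
  obtain ⟨hv₁, hv₂⟩ := hv
  have hnbhd : {u | twoCliqueAdj Q₁ Q₂ v u} = Q₁ \ {v} := by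
    ext u
    simp only [twoCliqueAdj, Set.mem_ofPred_eq, Set.mem_sdiff, Set.mem_singleton_iff]
    grind
  rw [outDeg, hnbhd, Set.ncard_sdiff_singleton_of_mem hv₁]

lemma forall_mem_diff_or_of_isChain (hU : Q₁ ∪ Q₂ = Set.univ) {t : List V}
    (ht : t.IsChain (twoCliqueAdj Q₁ Q₂)) (hT : ∀ z ∈ t, z ∉ Q₁ ∩ Q₂) :
    (∀ z ∈ t, z ∈ Q₁ \ Q₂) ∨ (∀ z ∈ t, z ∈ Q₂ \ Q₁) := by
  cases t with
  | nil => simp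
  | cons a t =>
    have hside : ∀ z ∈ a :: t, z ∈ Q₁ ↔ a ∈ Q₁ :=
      (List.IsChain.iff_mem.1 ht).induction _ _
        (fun x y ⟨hx, hy, hxy⟩ hxa => (hxy.mem_left_iff (hT x hx) (hT y hy)).symm.trans hxa)
        (fun _ => Iff.rfl)
    by_cases ha : a ∈ Q₁
    · refine .inl fun z hz => ?_
      have hz₁ := (hside z hz).2 ha
      exact ⟨hz₁, fun hz₂ => hT z hz ⟨hz₁, hz₂⟩⟩
    · refine .inr fun z hz => ?_
      have hz₁ : z ∉ Q₁ := fun h => ha ((hside z hz).1 h)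
      exact ⟨(hU ▸ Set.mem_univ z : z ∈ Q₁ ∪ Q₂).resolve_left hz₁, hz₁⟩

lemma length_le_max_ncard_of_isDipathFrom [Finite V] (hU : Q₁ ∪ Q₂ = Set.univ) {x y : V}
    (hxy : x ≠ y) {p : List V} (hp : IsDipathFrom (twoCliqueAdj Q₁ Q₂) x y p)
    (hT : ∀ z ∈ p, z ∉ Q₁ ∩ Q₂ ∨ z = x ∨ z = y) :
    p.length ≤ max (Q₁ \ Q₂).ncard (Q₂ \ Q₁).ncard + 2 := by
  have hdec := hp.eq_cons_listInterior_append hxy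
  generalize listInterior p = I at hdec
  have hnd : (x :: (I ++ [y])).Nodup := hdec ▸ hp.2.2.2.2 hxy
  have hInd : I.Nodup := (List.nodup_cons.1 hnd).2.sublist (List.sublist_append_left I [y])
  have hxyI : x ∉ I ∧ y ∉ I := by
    simp only [List.nodup_cons, List.nodup_append, List.mem_singleton] at hnd
    exact ⟨fun hx => hnd.1 (List.mem_append_left _ hx), fun hy => hnd.2.2.2 y hy y rfl rfl⟩
  have hIT : ∀ z ∈ I, z ∉ Q₁ ∩ Q₂ := fun z hz =>
    (hT z (by rw [hdec]; simp [hz])).resolve_right (by rintro (rfl | rfl) <;> tauto)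
  have hI : I.IsChain (twoCliqueAdj Q₁ Q₂) := hp.1.infix ⟨[x], [y], hdec.symm⟩
  have hlen : p.length = I.length + 2 := by rw [hdec]; simp
  rcases forall_mem_diff_or_of_isChain hU hI hIT with hside | hside
  · have := hInd.length_le_ncard hside; omega
  · have := hInd.length_le_ncard hside; omega

end twoCliqueAdj

lemma not_arbHamHLinked_of_short_avoiding_paths {V : Type*} [Fintype V] {A : V → V → Prop}
    {k L : ℕ} {α β : ℝ} {T : Set V} (hk : 1 ≤ k) (hT : T.ncard = 2 * k)
    (hshort : ∀ x y, x ∈ T → y ∈ T → x ≠ y → ∀ p : List V, IsDipathFrom A x y p →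
      (∀ z ∈ p, z ∉ T ∨ z = x ∨ z = y) → p.length ≤ L)
    (h5k : 5 * k ≤ Fintype.card V) (hL : L < Fintype.card V - 5 * k + 5)
    (hα : 4 * k ≤ α * Fintype.card V)
    (hβ : β * Fintype.card V ≤ (Fintype.card V - 5 * k + 4 : ℕ)) :
    ¬ ArbHamHLinked A (fun i : Fin k => ((Sum.inl i : Fin k ⊕ Fin k), (Sum.inr i : Fin k ⊕ Fin k)))
      α β := by
  obtain ⟨k, rfl⟩ := Nat.exists_eq_add_of_le' hk
  set n := Fintype.card V
  intro hlink
  let e : Fin (k + 1) ⊕ Fin (k + 1) ≃ T := Fintype.equivOfCardEq <| by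
    rw [← Nat.card_eq_fintype_card, ← Nat.card_eq_fintype_card, Nat.card_coe_set_eq, hT]
    simp [two_mul]
  -- one path long enough to escape the `β`-condition, the other `k` of length 4
  let N : Fin (k + 1) → ℕ := Fin.cons (n - 5 * (k + 1) + 4) fun _ => 4
  have hN : ∀ i, 4 ≤ N i := Fin.cases (by simp [N]) (by simp [N])
  have hsum : (∑ i, if (N i : ℝ) < β * n then (N i : ℝ) else 0) ≤ α * n := by
    have hβ_long : ¬ ((N 0 : ℝ) < β * n) := not_lt.2 hβ
    rw [Fin.sum_univ_succ, if_neg hβ_long, zero_add]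
    calc ∑ i : Fin k, (if (N i.succ : ℝ) < β * n then (N i.succ : ℝ) else 0)
        ≤ ∑ _i : Fin k, (4 : ℝ) := Finset.sum_le_sum fun i _ => by split_ifs <;> simp [N]
      _ ≤ α * n := by push_cast at hα; simp; linarith
  have hcount : (∑ i, (N i - 1)) + Fintype.card (Fin (k + 1) ⊕ Fin (k + 1)) = n := by
    simp [N, Fin.sum_univ_succ]
    omega
  obtain ⟨g, hg⟩ := hlink (fun w => e w) (Subtype.val_injective.comp e.injective) N hN hsum hcount
  have hne : (e (.inl 0) : V) ≠ e (.inr 0) := fun h => Sum.inl_ne_inr (e.injective (Subtype.ext h))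
  have hlong := hshort _ _ (e _).2 (e _).2 hne (g 0) (hg.1 0).1 fun z hz => by
    by_cases hzT : z ∈ T
    · obtain ⟨w, rfl⟩ : ∃ w, (e w : V) = z := ⟨e.symm ⟨z, hzT⟩, by simp⟩
      rcases w with j | j
      exacts [.inr (hg.eq_endpoint_of_mem_of_eq_endpoint hne hz (.inl rfl)),
        .inr (hg.eq_endpoint_of_mem_of_eq_endpoint hne hz (.inr rfl))]
    · exact .inl hzT
  have hlen := (hg.1 0).2
  simp only [N, Fin.cons_zero] at hlen
  omega

lemma eventually_le_const_mul_natCast {c d : ℝ} (hd : 0 < d) : ∀ᶠ m : ℕ in atTop, c ≤ d * m :=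
  (tendsto_natCast_atTop_atTop.const_mul_atTop hd).eventually_ge_atTop c

theorem semidegree_bound_best_possible_general (k : ℕ) (hk : 1 ≤ k)
    (α β : ℝ) (hα0 : 0 < α) (hβ1 : β < 1) :
    ∃ n₀ : ℕ, ∀ m : ℕ, n₀ ≤ 2 * m →
      ∀ (V : Type) [Fintype V] (Q₁ Q₂ : Set V) (A : V → V → Prop),
        Fintype.card V = 2 * m →
        Q₁ ∪ Q₂ = Set.univ →
        Q₁.ncard = m + k → Q₂.ncard = m + k → (Q₁ ∩ Q₂).ncard = 2 * k →
        (∀ u v, A u v ↔ u ≠ v ∧ ((u ∈ Q₁ ∧ v ∈ Q₁) ∨ (u ∈ Q₂ ∧ v ∈ Q₂))) →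
        ((∀ v, m + k - 1 ≤ outDeg A v ∧ m + k - 1 ≤ inDeg A v) ∧
          (∃ v, outDeg A v = m + k - 1 ∨ inDeg A v = m + k - 1)) ∧
        (∀ x₁ y₁, x₁ ∈ Q₁ ∩ Q₂ → y₁ ∈ Q₁ ∩ Q₂ → x₁ ≠ y₁ →
          ∀ p : List V, IsDipathFrom A x₁ y₁ p →
            (∀ z ∈ p, z ∉ Q₁ ∩ Q₂ ∨ z = x₁ ∨ z = y₁) →
            p.length ≤ m - k + 2) ∧
        ¬ ArbHamHLinked A
            (fun i : Fin k => ((Sum.inl i : Fin k ⊕ Fin k), (Sum.inr i : Fin k ⊕ Fin k)))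
            α β := by
  obtain ⟨M, hM⟩ := eventually_atTop.1 <| (eventually_ge_atTop (4 * k)).and <|
    (eventually_le_const_mul_natCast (c := 4 * k) (by positivity : (0 : ℝ) < α * 2)).and
    (eventually_le_const_mul_natCast (c := 5 * k) (by linarith : (0 : ℝ) < (1 - β) * 2))
  refine ⟨2 * M, fun m hm V _ Q₁ Q₂ A hcard hU hQ₁ hQ₂ hQ₁₂ hA => ?_⟩
  obtain ⟨hkm, hα, hβ⟩ := hM m (by omega)
  obtain rfl : A = twoCliqueAdj Q₁ Q₂ := funext₂ fun u v => propext (hA u v)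
  have hdiff₁ : (Q₁ \ Q₂).ncard = m - k := by
    have := Set.ncard_inter_add_ncard_sdiff_eq_ncard Q₁ Q₂; omega
  have hdiff₂ : (Q₂ \ Q₁).ncard = m - k := by
    have := Set.ncard_inter_add_ncard_sdiff_eq_ncard Q₂ Q₁; rw [Set.inter_comm] at this; omega
  have hmin := twoCliqueAdj.min_ncard_sub_one_le_outDeg hU
  rw [hQ₁, hQ₂, min_self] at hmin
  have hshort : ∀ x₁ y₁, x₁ ∈ Q₁ ∩ Q₂ → y₁ ∈ Q₁ ∩ Q₂ → x₁ ≠ y₁ →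
      ∀ p : List V, IsDipathFrom (twoCliqueAdj Q₁ Q₂) x₁ y₁ p →
        (∀ z ∈ p, z ∉ Q₁ ∩ Q₂ ∨ z = x₁ ∨ z = y₁) → p.length ≤ m - k + 2 :=
    fun _ _ _ _ hxy _ hp hT =>
      (twoCliqueAdj.length_le_max_ncard_of_isDipathFrom hU hxy hp hT).trans (by omega)
  obtain ⟨v, hv⟩ := Set.nonempty_of_ncard_ne_zero (s := Q₁ \ Q₂) (by omega)
  refine ⟨⟨fun v => ⟨hmin v, by rw [inDeg_eq_outDeg]; exact hmin v⟩, v, .inl ?_⟩, hshort, ?_⟩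
  · rw [twoCliqueAdj.outDeg_of_mem_diff hv, hQ₁]
  · have h5k : 5 * k ≤ 2 * m := by omega
    refine not_arbHamHLinked_of_short_avoiding_paths hk hQ₁₂ hshort (by omega) (by omega) ?_ ?_
    · rw [hcard]; push_cast; linarith
    · rw [hcard, Nat.cast_add, Nat.cast_sub h5k]; push_cast; linarith

/-- **Sharpness of the semi-degree bound.**  Let `k ≥ 1` and let `n = 2m` be a large even
integer.  Let `D` be the union of two complete digraphs `Q₁, Q₂`, each on `n/2 + k = m + k`
vertices, sharing exactly `2k` vertices.  Then `δ⁰(D) = n/2 + k - 1`; moreover for any two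
distinct vertices `x₁, y₁` of `Q₁ ∩ Q₂`, every directed path from `x₁` to `y₁` all of whose
vertices avoid `Q₁ ∩ Q₂` except possibly `x₁, y₁` has length at most `n/2 - k + 1`
(i.e. at most `m - k + 2` vertices); consequently, taking `H` to be `k` pairwise disjoint
arcs, `D` is not arbitrary Hamiltonian `H`-linked. -/
theorem semidegree_bound_best_possible (k : ℕ) (hk : 1 ≤ k)
    (α β : ℝ) (hα0 : 0 < α) (hα1 : α < 1) (hβ0 : 0 < β) (hβ1 : β < 1) :
    ∃ n₀ : ℕ, ∀ m : ℕ, n₀ ≤ 2 * m →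
      ∀ (V : Type) [Fintype V] (Q₁ Q₂ : Set V) (A : V → V → Prop),
        Fintype.card V = 2 * m →
        Q₁ ∪ Q₂ = Set.univ →
        Q₁.ncard = m + k → Q₂.ncard = m + k → (Q₁ ∩ Q₂).ncard = 2 * k →
        (∀ u v, A u v ↔ u ≠ v ∧ ((u ∈ Q₁ ∧ v ∈ Q₁) ∨ (u ∈ Q₂ ∧ v ∈ Q₂))) →
        ((∀ v, m + k - 1 ≤ outDeg A v ∧ m + k - 1 ≤ inDeg A v) ∧
          (∃ v, outDeg A v = m + k - 1 ∨ inDeg A v = m + k - 1)) ∧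
        (∀ x₁ y₁, x₁ ∈ Q₁ ∩ Q₂ → y₁ ∈ Q₁ ∩ Q₂ → x₁ ≠ y₁ →
          ∀ p : List V, IsDipathFrom A x₁ y₁ p →
            (∀ z ∈ p, z ∉ Q₁ ∩ Q₂ ∨ z = x₁ ∨ z = y₁) →
            p.length ≤ m - k + 2) ∧
        ¬ ArbHamHLinked A
            (fun i : Fin k => ((Sum.inl i : Fin k ⊕ Fin k), (Sum.inr i : Fin k ⊕ Fin k)))
            α β :=
  semidegree_bound_best_possible_general k hk α β hα0 hβ1
end

section
/- Let k ≥ 5 and let n be an integer such that l = (n + 3k − 1)/(2(3k − 2)) is an integer with l ≥ 2. Let D be the digraph on n vertices obtained from the disjoint union of an independent set I of (n − 3k + 1)/2 vertices and l pairwise disjoint complete digraphs each on 3k − 2 vertices, by adding all arcs in both directions between I and the complete digraphs. Then δ⁰(D) = (n + 3k − 5)/2 ≥ (n + 2k)/2; yet, taking H to be k pairwise disjoint arcs lying inside a single one of the l complete digraphs and prescribing the lengths n_1 = ⋯ = n_{k−1} = 3 and n_k = n − 4k + 3, D contains no Hamiltonian (NH)-subdivision for this choice. Hence the condition n_i ≥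 4 in the main theorem cannot be weakened to n_i ≥ 3. -/
/-!
Vertices of `I` have in- and out-degree `|⋃ j, B j| = d + 2` and block vertices
`|I| + 3k - 3 = d`. A neighbour of a vertex of `B j` lies in `I` or in `B j`, and `I` is
independent, so every path of length 3 between two vertices of `B j₀` has an interior
vertex in `B j₀`. The `k - 1` paths of length 3 thus give `k - 1` vertices of `B j₀`,
distinct from each other and from the `2k` ends: `3k - 1` vertices in a block of `3k - 2`.
-/

open scoped Classical

open Function Set

lemma inDeg_eq_outDeg_of_symm {V : Type*} {A : V → V → Prop} (hA : ∀ u v, A u v → A v u)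
    (v : V) : inDeg A v = outDeg A v := by
  simp only [inDeg, outDeg, fun u => (⟨hA u v, hA v u⟩ : A u v ↔ A v u)]

lemma IsDipathFrom.ne_of_mem_listInterior {V : Type*} {A : V → V → Prop} {a b x : V}
    {p : List V} (hp : IsDipathFrom A a b p) (hab : a ≠ b) (hx : x ∈ listInterior p) :
    x ≠ a ∧ x ≠ b := by
  obtain ⟨-, hhead, hlast, -, hnodup⟩ := hp
  have hnodup := hnodup hab
  constructor
  · obtain ⟨t, rfl⟩ := List.head?_eq_some_iff.1 hhead
    exact fun h => (List.nodup_cons.1 hnodup).1 (h ▸ List.mem_of_mem_dropLast hx)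
  · rw [← List.dropLast_append_getLast? _ hlast, List.nodup_append] at hnodup
    rw [listInterior, ← List.tail_dropLast] at hx
    exact fun h => hnodup.2.2 x (List.mem_of_mem_tail hx) b (List.mem_singleton_self b) h

lemma injective_sumElim_of_mem_listInterior {V κ : Type*} {A : V → V → Prop} {k : ℕ}
    {u : Fin k ⊕ Fin k → V} (hu : Injective u) {g : Fin k → List V}
    (hg : ∀ i, IsDipathFrom A (u (.inl i)) (u (.inr i)) (g i))
    (hdisj : ∀ i j, i ≠ j → ∀ x ∈ listInterior (g i), x ∉ g j)
    {σ : κ → Fin k} (hσ : Injective σ) {w : κ → V}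
    (hw : ∀ t, w t ∈ listInterior (g (σ t))) :
    Injective (Sum.elim u w) := by
  have hmem (i : Fin k) : u (.inl i) ∈ g i ∧ u (.inr i) ∈ g i :=
    ⟨List.mem_of_mem_head? (hg i).2.1, List.mem_of_getLast? (hg i).2.2.1⟩
  refine hu.sumElim (fun t t' h => hσ (by_contra fun hne => ?_)) ?_
  · exact hdisj _ _ hne _ (hw t) (h ▸ List.mem_of_mem_tail (List.mem_of_mem_dropLast (hw t')))
  rintro (i | i) t h
  all_goals
    by_cases hi : σ t = i
    · subst hi
      have := (hg (σ t)).ne_of_mem_listInterior (hu.ne Sum.inl_ne_inr) (hw t)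
      simp_all
    · exact hdisj _ _ hi _ (hw t) (h ▸ by simp [hmem])

def joinArc {V ι : Type*} (I : Set V) (B : ι → Set V) (u v : V) : Prop :=
  (u ∈ I ∧ v ∈ ⋃ j, B j) ∨ (u ∈ ⋃ j, B j ∧ v ∈ I) ∨ (∃ j, u ∈ B j ∧ v ∈ B j ∧ u ≠ v)

section joinArc

variable {V ι : Type*} {I : Set V} {B : ι → Set V} {j : ι} {u v : V}

lemma joinArc_symm (h : joinArc I B u v) : joinArc I B v u := by
  rcases h with ⟨hu, hv⟩ | ⟨hu, hv⟩ | ⟨j, hu, hv, hne⟩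
  exacts [.inr (.inl ⟨hv, hu⟩), .inl ⟨hv, hu⟩, .inr (.inr ⟨j, hv, hu, hne.symm⟩)]

lemma setOf_joinArc_of_mem_indep (hIB : ∀ j, Disjoint I (B j)) (hv : v ∈ I) :
    {w | joinArc I B v w} = ⋃ j, B j := by
  have hvB : v ∉ ⋃ j, B j := disjoint_left.1 (disjoint_iUnion_right.2 hIB) hv
  ext w
  simp only [joinArc, mem_ofPred_eq]
  constructor
  · rintro (⟨-, hw⟩ | ⟨hvB', -⟩ | ⟨j, hv', -⟩)
    exacts [hw, absurd hvB' hvB, absurd (mem_iUnion_of_mem j hv') hvB]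
  · exact fun hw => .inl ⟨hv, hw⟩

lemma setOf_joinArc_of_mem_block (hIB : ∀ j, Disjoint I (B j)) (hBB : Pairwise (Disjoint on B))
    (hv : v ∈ B j) : {w | joinArc I B v w} = I ∪ (B j \ {v}) := by
  have hvI : v ∉ I := fun h => disjoint_left.1 (hIB j) h hv
  have hblock {j'} (h : v ∈ B j') : j' = j := hBB.eq (not_disjoint_iff.2 ⟨v, h, hv⟩)
  ext w
  simp only [joinArc, mem_ofPred_eq, mem_union, mem_sdiff, mem_singleton_iff]
  constructor
  · rintro (⟨hv', -⟩ | ⟨-, hw⟩ | ⟨j', hv', hw, hne⟩)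
    · exact absurd hv' hvI
    · exact .inl hw
    · exact .inr ⟨hblock hv' ▸ hw, Ne.symm hne⟩
  · rintro (hw | ⟨hw, hne⟩)
    · exact .inr (.inl ⟨mem_iUnion_of_mem j hv, hw⟩)
    · exact .inr (.inr ⟨j, hv, hw, Ne.symm hne⟩)

lemma not_joinArc_of_mem_indep (hIB : ∀ j, Disjoint I (B j)) (hu : u ∈ I) (hv : v ∈ I) :
    ¬ joinArc I B u v := by
  intro h
  have hv' : v ∈ {w | joinArc I B u w} := h
  rw [setOf_joinArc_of_mem_indep hIB hu] at hv'
  exact disjoint_left.1 (disjoint_iUnion_right.2 hIB) hv hv'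

lemma outDeg_joinArc_of_mem_indep (hIB : ∀ j, Disjoint I (B j)) (hv : v ∈ I) :
    outDeg (joinArc I B) v = (⋃ j, B j).ncard := by
  rw [outDeg, setOf_joinArc_of_mem_indep hIB hv]

lemma outDeg_joinArc_of_mem_block [Finite V] (hIB : ∀ j, Disjoint I (B j))
    (hBB : Pairwise (Disjoint on B)) (hv : v ∈ B j) :
    outDeg (joinArc I B) v = I.ncard + ((B j).ncard - 1) := by
  rw [outDeg, setOf_joinArc_of_mem_block hIB hBB hv,
    ncard_union_eq ((hIB j).mono_right sdiff_subset), ncard_sdiff_singleton_of_mem hv]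

lemma exists_mem_listInterior_mem_block (hIB : ∀ j, Disjoint I (B j))
    (hBB : Pairwise (Disjoint on B)) {a b : V} {p : List V} (ha : a ∈ B j) (hb : b ∈ B j)
    (hp : IsDipathFrom (joinArc I B) a b p) (hlen : p.length = 4) :
    ∃ w ∈ listInterior p, w ∈ B j := by
  obtain ⟨hchain, hhead, hlast, -⟩ := hp
  match p, hlen with
  | [a', x, y, b'], _ =>
    simp only [List.head?_cons, Option.some.injEq, List.getLast?_cons_cons,
      List.getLast?_singleton] at hhead hlast
    subst hhead hlast
    change List.IsChain _ _ at hchain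
    simp only [List.isChain_cons_cons, List.isChain_singleton, and_true] at hchain
    obtain ⟨hax, hxy, hyb⟩ := hchain
    have hx : x ∈ I ∪ (B j \ {a'}) := (setOf_joinArc_of_mem_block hIB hBB ha).le hax
    have hy : y ∈ I ∪ (B j \ {b'}) :=
      (setOf_joinArc_of_mem_block hIB hBB hb).le (joinArc_symm hyb)
    simp only [listInterior, List.tail_cons, List.dropLast_cons_cons, List.dropLast_singleton,
      List.mem_cons, List.not_mem_nil, or_false, exists_eq_or_imp, exists_eq_left]
    rcases hx with hxI | ⟨hxB, -⟩
    · rcases hy with hyI | ⟨hyB, -⟩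
      · exact absurd hxy (not_joinArc_of_mem_indep hIB hxI hyI)
      · exact .inr hyB
    · exact .inl hxB

lemma IsHamSubdivision.add_le_ncard_block [Finite V] (hIB : ∀ j, Disjoint I (B j))
    (hBB : Pairwise (Disjoint on B)) {k m : ℕ} {u : Fin k ⊕ Fin k → V} (hu : Injective u)
    (huB : ∀ z, u z ∈ B j) {N : Fin k → ℕ} {g : Fin k → List V}
    (hg : IsHamSubdivision (joinArc I B) (fun i => (u (.inl i), u (.inr i))) N g)
    {σ : Fin m → Fin k} (hσ : Injective σ) (hN : ∀ t, N (σ t) = 3) :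
    2 * k + m ≤ (B j).ncard := by
  choose w hw hwB using fun t => exists_mem_listInterior_mem_block hIB hBB (huB _) (huB _)
    (hg.1 (σ t)).1 (by rw [(hg.1 _).2, hN])
  have hinj := injective_sumElim_of_mem_listInterior hu (fun i => (hg.1 i).1) hg.2.1 hσ hw
  calc 2 * k + m = Nat.card ((Fin k ⊕ Fin k) ⊕ Fin m) := by simp [two_mul]
    _ = (range (Sum.elim u w)).ncard := (ncard_range_of_injective hinj).symm
    _ ≤ (B j).ncard :=
      ncard_le_ncard (range_subset_iff.2 (by rintro (z | t); exacts [huB z, hwB t]))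

end joinArc

theorem min_length_four_is_necessary_general (k l n : ℕ) (hk : 5 ≤ k) :
    ∀ (V : Type) [Fintype V] (I : Set V) (B : Fin l → Set V) (A : V → V → Prop),
      Fintype.card V = n →
      2 * I.ncard + 3 * k = n + 1 →
      (∀ j, (B j).ncard = 3 * k - 2) →
      (∀ j j', j ≠ j' → Disjoint (B j) (B j')) →
      (∀ j, Disjoint I (B j)) →
      I ∪ (⋃ j, B j) = Set.univ →
      (∀ u v, A u v ↔
        ((u ∈ I ∧ v ∈ ⋃ j, B j) ∨ (u ∈ ⋃ j, B j ∧ v ∈ I) ∨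
          (∃ j, u ∈ B j ∧ v ∈ B j ∧ u ≠ v))) →
      ∀ d : ℕ, 2 * d + 5 = n + 3 * k →
        ((∀ v, d ≤ outDeg A v ∧ d ≤ inDeg A v) ∧
          (∃ v, outDeg A v = d ∨ inDeg A v = d) ∧
          n + 2 * k ≤ 2 * d) ∧
        (∀ j₀ : Fin l, ∀ u : Fin k ⊕ Fin k → V, Function.Injective u →
          (∀ z, u z ∈ B j₀) →
          ∀ nk : ℕ, nk + 4 * k = n + 3 →
            ¬ ∃ g : Fin k → List V,
                IsHamSubdivision A (fun i => (u (Sum.inl i), u (Sum.inr i)))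
                  (fun i => if (i : ℕ) < k - 1 then 3 else nk) g) := by
  intro V _ I B A hcard hI hB hBB hIB hunion hA d hd
  obtain rfl : A = joinArc I B := funext₂ fun u v => propext (hA u v)
  have hn : I.ncard + (⋃ j, B j).ncard = n := by
    rw [← ncard_union_eq (disjoint_iUnion_right.2 hIB), hunion, ncard_univ,
      Nat.card_eq_fintype_card, hcard]
  have hdeg_indep (v : V) (hv : v ∈ I) : outDeg (joinArc I B) v = d + 2 := by
    rw [outDeg_joinArc_of_mem_indep hIB hv]
    omega
  have hdeg_block (v : V) (hv : v ∉ I) : outDeg (joinArc I B) v = d := by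
    have hv' : v ∈ I ∪ ⋃ j, B j := hunion ▸ mem_univ v
    obtain ⟨j, hvj⟩ := mem_iUnion.1 (hv'.resolve_left hv)
    rw [outDeg_joinArc_of_mem_block hIB hBB hvj, hB]
    omega
  obtain ⟨v₀, hv₀⟩ : ∃ v, v ∉ I := by
    by_contra! h
    rw [eq_univ_of_forall h, ncard_univ, Nat.card_eq_fintype_card, hcard] at hI
    omega
  refine ⟨⟨fun v => ?_, ⟨v₀, .inl (hdeg_block v₀ hv₀)⟩, by omega⟩, ?_⟩
  · rw [inDeg_eq_outDeg_of_symm fun _ _ => joinArc_symm, and_self]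
    by_cases hv : v ∈ I
    · rw [hdeg_indep v hv]
      omega
    · rw [hdeg_block v hv]
  · rintro j₀ u hu huB nk hnk ⟨g, hg⟩
    have hcount := hg.add_le_ncard_block hIB hBB hu huB (Fin.castLE_injective (Nat.sub_le k 1))
      fun t => if_pos t.isLt
    rw [hB] at hcount
    omega

/-- **The condition `nᵢ ≥ 4` is necessary.**  Let `k ≥ 5` and `l ≥ 2` with
`2(3k-2)l = n + 3k - 1`.  Let `D` be obtained from an independent set `I` of
`(n - 3k + 1)/2` vertices together with `l` disjoint complete digraphs `B j`, each on
`3k - 2` vertices, by adding all arcs in both directions between `I` and the `B j`.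
Then `δ⁰(D) = (n + 3k - 5)/2 ≥ (n + 2k)/2`, yet for `H` consisting of `k` disjoint arcs
inside a single `B j₀` and lengths `n₁ = ⋯ = n_{k-1} = 3`, `n_k = n - 4k + 3`, there is
no Hamiltonian `(N H)`-subdivision. -/
theorem min_length_four_is_necessary (k l n : ℕ) (hk : 5 ≤ k) (hl : 2 ≤ l)
    (hln : 2 * (3 * k - 2) * l + 1 = n + 3 * k) :
    ∀ (V : Type) [Fintype V] (I : Set V) (B : Fin l → Set V) (A : V → V → Prop),
      Fintype.card V = n →
      2 * I.ncard + 3 * k = n + 1 →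
      (∀ j, (B j).ncard = 3 * k - 2) →
      (∀ j j', j ≠ j' → Disjoint (B j) (B j')) →
      (∀ j, Disjoint I (B j)) →
      I ∪ (⋃ j, B j) = Set.univ →
      (∀ u v, A u v ↔
        ((u ∈ I ∧ v ∈ ⋃ j, B j) ∨ (u ∈ ⋃ j, B j ∧ v ∈ I) ∨
          (∃ j, u ∈ B j ∧ v ∈ B j ∧ u ≠ v))) →
      ∀ d : ℕ, 2 * d + 5 = n + 3 * k →
        ((∀ v, d ≤ outDeg A v ∧ d ≤ inDeg A v) ∧
          (∃ v, outDeg A v = d ∨ inDeg A v = d) ∧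
          n + 2 * k ≤ 2 * d) ∧
        (∀ j₀ : Fin l, ∀ u : Fin k ⊕ Fin k → V, Function.Injective u →
          (∀ z, u z ∈ B j₀) →
          ∀ nk : ℕ, nk + 4 * k = n + 3 →
            ¬ ∃ g : Fin k → List V,
                IsHamSubdivision A (fun i => (u (Sum.inl i), u (Sum.inr i)))
                  (fun i => if (i : ℕ) < k - 1 then 3 else nk) g) :=
  min_length_four_is_necessary_general k l n hk
end

section
/- (Connecting Lemma) For every ε′ ∈ (0,1) there exist γ > 0 and n₀ such that the following holds for all n ≥ n₀ and all k ≤ γn. Let D be a digraph on n vertices with δ⁰(D) ≥ n/2 + k which does not satisfy the extremal condition EC with parameter ε′. Let P_1 and P_2 be two vertex-disjoint directed paths in D, each of length at most 3, where P_1 ends at a vertex b and P_2 starts at a vertex c, and let U ⊆ V(D) be any set of at most γn forbidden vertices. Then D contains a directed path from b to c with at most two internal vertices, all of whose internal vertices lie outside U ∪ V(P_1) ∪ V(P_2). -/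
open scoped Classical

/-- The number of arcs directed from `S` to `T`. -/
noncomputable def arcsCount {V : Type*} (A : V → V → Prop) (S T : Set V) : ℕ :=
  {p : V × V | p.1 ∈ S ∧ p.2 ∈ T ∧ A p.1 p.2}.ncard

/-- The extremal condition **EC** with parameter `ε'`: there are (not necessarily
disjoint) vertex sets `U₁, U₂` of size at least `(1/2 - ε')n` with at most `(ε'n)²`
arcs from `U₁` to `U₂`. -/
def SatisfiesEC {V : Type*} [Fintype V] (A : V → V → Prop) (ε' : ℝ) : Prop :=
  ∃ U₁ U₂ : Set V,
    (1/2 - ε') * Fintype.card V ≤ (U₁.ncard : ℝ) ∧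
    (1/2 - ε') * Fintype.card V ≤ (U₂.ncard : ℝ) ∧
    (arcsCount A U₁ U₂ : ℝ) ≤ (ε' * Fintype.card V)^2

/-
Remove from the out-neighbourhood of `b` and from the in-neighbourhood of `c` the forbidden
set `U ∪ V(P₁) ∪ V(P₂)`, which has at most `γn + 8 ≤ ε'n` vertices. Both remaining sets
still have at least `(1/2 - ε')n` vertices, so stability yields an arc `x → y` from the first
to the second, and `b x y c` is the required path.
-/

section Connecting

variable {V : Type*}

theorem ncard_setOf_mem_le_length (l : List V) : {x | x ∈ l}.ncard ≤ l.length := by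
  rw [← List.coe_toFinset, Set.ncard_coe_finset]
  exact l.toFinset_card_le

theorem ncard_sub_ncard_le_ncard_diff [Finite V] (S B : Set V) :
    (S.ncard : ℝ) - B.ncard ≤ (S \ B).ncard := by
  have := Set.ncard_le_ncard_sdiff_add_ncard S B
  rw [sub_le_iff_le_add]
  exact_mod_cast this

theorem exists_arc_of_not_satisfiesEC [Fintype V] {A : V → V → Prop} {ε' : ℝ}
    (hEC : ¬ SatisfiesEC A ε') {S T : Set V}
    (hS : (1/2 - ε') * Fintype.card V ≤ (S.ncard : ℝ))
    (hT : (1/2 - ε') * Fintype.card V ≤ (T.ncard : ℝ)) :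
    ∃ x ∈ S, ∃ y ∈ T, A x y := by
  by_contra! hno
  have hzero : arcsCount A S T = 0 := by
    rw [arcsCount, Set.ncard_eq_zero]
    exact Set.eq_empty_of_forall_notMem fun p ⟨hp, hq, hA⟩ => hno p.1 hp p.2 hq hA
  exact hEC ⟨S, T, hS, hT, by rw [hzero, Nat.cast_zero]; positivity⟩

theorem isDipathFrom_of_three_arcs {A : V → V → Prop} {b x y c : V}
    (hbx : A b x) (hxy : A x y) (hyc : A y c) (hnd : [b, x, y, c].Nodup) :
    IsDipathFrom A b c [b, x, y, c] :=
  ⟨.cons_cons hbx (.cons_cons hxy (.cons_cons hyc (.singleton c))), rfl, rfl,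
    fun _ => hnd.sublist (List.dropLast_sublist _), fun _ => hnd⟩

end Connecting

theorem connecting_lemma_general (ε' : ℝ) (hε'0 : 0 < ε') :
    ∃ (γ : ℝ) (n₀ : ℕ), 0 < γ ∧
      ∀ n k : ℕ, n₀ ≤ n → (k : ℝ) ≤ γ * n →
        ∀ (V : Type) [Fintype V] (A : V → V → Prop),
          (∀ v, ¬ A v v) →
          Fintype.card V = n →
          (∀ v : V, (n : ℝ) / 2 + k ≤ (outDeg A v : ℝ) ∧
                    (n : ℝ) / 2 + k ≤ (inDeg A v : ℝ)) →
          ¬ SatisfiesEC A ε' →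
          ∀ (p₁ p₂ : List V) (b c : V),
            p₁.Chain' A → p₁.Nodup → p₁.length ≤ 4 → p₁.getLast? = some b →
            p₂.Chain' A → p₂.Nodup → p₂.length ≤ 4 → p₂.head? = some c →
            (∀ x ∈ p₁, x ∉ p₂) →
            ∀ U : Set V, (U.ncard : ℝ) ≤ γ * n →
              ∃ q : List V, IsDipathFrom A b c q ∧ (listInterior q).length ≤ 2 ∧
                ∀ x ∈ listInterior q, x ∉ U ∧ x ∉ p₁ ∧ x ∉ p₂ := by
  refine ⟨ε' / 2, ⌈16 / ε'⌉₊, by positivity, ?_⟩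
  intro n k hn _ V _ A hirr hcard hdeg hEC p₁ p₂ b c _ _ hl₁ hb _ _ hl₂ hc hdisj U hU
  replace hb : b ∈ p₁ := List.mem_of_getLast? hb
  replace hc : c ∈ p₂ := List.mem_of_mem_head? hc
  have h16 : 16 ≤ ε' * n := by
    rw [← div_le_iff₀' hε'0]
    exact (Nat.le_ceil _).trans (by exact_mod_cast hn)
  set Bad : Set V := U ∪ {x | x ∈ p₁} ∪ {x | x ∈ p₂}
  have hBad : (Bad.ncard : ℝ) ≤ ε' * n := by
    have : Bad.ncard ≤ (U ∪ {x | x ∈ p₁}).ncard + {x | x ∈ p₂}.ncard := Set.ncard_union_le _ _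
    have := Set.ncard_union_le U {x | x ∈ p₁}
    have := (ncard_setOf_mem_le_length p₁).trans hl₁
    have := (ncard_setOf_mem_le_length p₂).trans hl₂
    have : (Bad.ncard : ℝ) ≤ U.ncard + 4 + 4 := by exact_mod_cast (by omega)
    linarith
  have hlarge (S : Set V) (hS : (n : ℝ) / 2 + k ≤ S.ncard) :
      (1/2 - ε') * Fintype.card V ≤ ((S \ Bad).ncard : ℝ) := by
    have := ncard_sub_ncard_le_ncard_diff S Bad
    rw [hcard]
    linarith [(Nat.cast_nonneg k : (0 : ℝ) ≤ k)]
  obtain ⟨x, ⟨hbx, hx⟩, y, ⟨hyc, hy⟩, hxy⟩ :=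
    exists_arc_of_not_satisfiesEC hEC (hlarge _ (hdeg b).1) (hlarge _ (hdeg c).2)
  simp only [Bad, Set.mem_union, Set.mem_ofPred_eq, not_or] at hx hy
  refine ⟨[b, x, y, c], isDipathFrom_of_three_arcs hbx hxy hyc ?_, by simp [listInterior], ?_⟩
  · have hxx := hirr x
    simp only [List.nodup_cons, List.mem_cons, List.not_mem_nil]
    grind
  · simp only [listInterior, List.tail, List.dropLast, List.mem_cons, List.not_mem_nil]
    grind

/-- **Connecting Lemma.** For every `ε' ∈ (0,1)` there are `γ > 0` and `n₀` such that for
all `n ≥ n₀`, `k ≤ γn`: if `D` is a digraph on `n` vertices with `δ⁰(D) ≥ n/2 + k` not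
satisfying **EC** with parameter `ε'`, `P₁, P₂` are disjoint directed paths of length at
most 3 with `P₁` ending at `b` and `P₂` starting at `c`, and `U` is a set of at most `γn`
forbidden vertices, then there is a directed path from `b` to `c` with at most two
internal vertices, all of them outside `U ∪ V(P₁) ∪ V(P₂)`. -/
theorem connecting_lemma (ε' : ℝ) (hε'0 : 0 < ε') (hε'1 : ε' < 1) :
    ∃ (γ : ℝ) (n₀ : ℕ), 0 < γ ∧
      ∀ n k : ℕ, n₀ ≤ n → (k : ℝ) ≤ γ * n →
        ∀ (V : Type) [Fintype V] (A : V → V → Prop),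
          (∀ v, ¬ A v v) →
          Fintype.card V = n →
          (∀ v : V, (n : ℝ) / 2 + k ≤ (outDeg A v : ℝ) ∧
                    (n : ℝ) / 2 + k ≤ (inDeg A v : ℝ)) →
          ¬ SatisfiesEC A ε' →
          ∀ (p₁ p₂ : List V) (b c : V),
            p₁.Chain' A → p₁.Nodup → p₁.length ≤ 4 → p₁.getLast? = some b →
            p₂.Chain' A → p₂.Nodup → p₂.length ≤ 4 → p₂.head? = some c →
            (∀ x ∈ p₁, x ∉ p₂) →
            ∀ U : Set V, (U.ncard : ℝ) ≤ γ * n →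
              ∃ q : List V, IsDipathFrom A b c q ∧ (listInterior q).length ≤ 2 ∧
                ∀ x ∈ listInterior q, x ∉ U ∧ x ∉ p₁ ∧ x ∉ p₂ :=
  connecting_lemma_general ε' hε'0
end

section
/- For every ε′ ∈ (0,1) there exist γ > 0 and n₀ such that the following holds for all n ≥ n₀ and all k ≤ γn. Let D be a digraph on n vertices with δ⁰(D) ≥ n/2 + k which does not satisfy the extremal condition EC with parameter ε′, let W ⊆ V(D) with |W| ≤ 2k, and set D′ = D − W. Then for every ordered pair (u, v) of vertices of D′ (possibly u = v), the digraph D′ contains at least γn⁴ distinct 4-paths absorbing (u, v). -/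
open scoped Classical

/-- The list of vertices of a quadruple. -/
def quadList {V : Type*} (z : V × V × V × V) : List V := [z.1, z.2.1, z.2.2.1, z.2.2.2]

/-- `z` records a 4-path `z₁z₂z₃z₄` of the digraph `A` all of whose vertices lie in `S`. -/
def IsFourPath {V : Type*} (A : V → V → Prop) (S : Set V) (z : V × V × V × V) : Prop :=
  (quadList z).Nodup ∧ (quadList z).Chain' A ∧ ∀ x ∈ quadList z, x ∈ S

/-- The 4-path `z = z₁z₂z₃z₄` absorbs the ordered pair `(u, v)`: `z₂u` and `vz₃` are arcs. -/
def AbsorbsPair {V : Type*} (A : V → V → Prop) (z : V × V × V × V) (u v : V) : Prop :=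
  A z.2.1 u ∧ A v z.2.2.1

/-! The in-neighbours of `u` and the out-neighbours of `v` outside `W` each number at least
`n/2 - k ≥ (1/2 - ε')n`, so stability yields more than `(ε'n)²` arcs `ab` from the first set to
the second. Each such arc is the middle arc of at least `(n/2 - k - 1)(n/2 - k - 2) ≥ n²/16`
paths `xaby` avoiding `W`, and every one of them absorbs `(u, v)`. Distinct arcs give distinct
paths, so there are at least `(ε'²/16) n⁴` absorbing paths. -/

open Finset

theorem Finset.cast_card_sub_one_le_card_erase {α : Type*} [DecidableEq α] (s : Finset α) (a : α) :
    (#s : ℝ) - 1 ≤ #(s.erase a) := by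
  have h : #s ≤ #(s.erase a) + 1 := Nat.sub_le_iff_le_add.mp pred_card_le_card_erase
  exact sub_le_iff_le_add.mpr (by exact_mod_cast h)

theorem ncard_sub_ncard_le_ncard_inter_compl {α : Type*} (s : Set α) {t : Set α}
    (ht : t.Finite) : (s.ncard : ℝ) - t.ncard ≤ (s ∩ tᶜ).ncard := by
  have h := Set.ncard_le_ncard_sdiff_add_ncard s t ht
  rw [Set.sdiff_eq] at h
  rw [sub_le_iff_le_add]
  exact_mod_cast h

theorem ncard_mul_le_ncard_of_le_ncard_fiber {α β : Type*} [Finite α] {s : Set α} {t : Set β}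
    (f : α → β) {m : ℝ} (h : ∀ b ∈ t, m ≤ {a ∈ s | f a = b}.ncard) :
    t.ncard * m ≤ s.ncard := by
  rcases t.finite_or_infinite with ht | ht
  · have := Fintype.ofFinite α
    obtain ⟨T, rfl⟩ := ht.exists_finset_coe
    rw [Set.ncard_coe_finset]
    calc (#T : ℝ) * m ≤ ∑ b ∈ T, ({a ∈ s | f a = b}.ncard : ℝ) := by
          simpa using card_nsmul_le_sum T _ m h
      _ = #{a ∈ s.toFinset | f a ∈ T} := by
          rw [← sum_card_fiberwise_eq_card_filter]
          push_cast
          refine sum_congr rfl fun b _ => ?_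
          rw [Set.ncard_eq_toFinset_card']
          congr 2
          ext
          simp
      _ ≤ s.ncard := by
          rw [Set.ncard_eq_toFinset_card']
          exact_mod_cast card_filter_le _ _
  · simp [ht.ncard]

section

variable {V : Type*} {A : V → V → Prop}

theorem isFourPath_of_arcs (hirr : ∀ v, ¬ A v v) {S : Set V} {x a b y : V}
    (hxa : A x a) (hab : A a b) (hby : A b y) (hxb : x ≠ b) (hay : a ≠ y) (hxy : x ≠ y)
    (hx : x ∈ S) (ha : a ∈ S) (hb : b ∈ S) (hy : y ∈ S) : IsFourPath A S (x, a, b, y) := by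
  have hne : ∀ {p q}, A p q → p ≠ q := fun h hpq => hirr _ (hpq ▸ h)
  refine ⟨?_, ?_, ?_⟩
  · simp [quadList, hne hxa, hxb, hxy, hne hab, hay, hne hby]
  · show List.IsChain A [x, a, b, y]
    simp [hxa, hab, hby]
  · simp [quadList, hx, ha, hb, hy]

/-- The paths `x a b y` are counted by choosing `x ∈ N⁻(a) ∩ S` other than `b`, then
`y ∈ N⁺(b) ∩ S` other than `a` and `x`. -/
theorem le_ncard_fourPaths_through_arc [Finite V] (hirr : ∀ v, ¬ A v v)
    {S : Set V} {a b : V} (hab : A a b) (ha : a ∈ S) (hb : b ∈ S) {d : ℝ} (hd : 2 ≤ d)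
    (hin : d ≤ ({x | A x a} ∩ S).ncard) (hout : d ≤ ({y | A b y} ∩ S).ncard) :
    (d - 1) * (d - 2) ≤
      {z : V × V × V × V | IsFourPath A S z ∧ z.2.1 = a ∧ z.2.2.1 = b}.ncard := by
  have := Fintype.ofFinite V
  set X := ({x | A x a} ∩ S).toFinset.erase b
  set Y := ({y | A b y} ∩ S).toFinset.erase a
  rw [Set.ncard_eq_toFinset_card'] at hin hout
  have hX : d - 1 ≤ #X := by
    linarith [cast_card_sub_one_le_card_erase ({x | A x a} ∩ S).toFinset b]
  have hY : d - 1 ≤ #Y := by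
    linarith [cast_card_sub_one_le_card_erase ({y | A b y} ∩ S).toFinset a]
  have hchoices : (#X : ℝ) * (#Y - 1) ≤ #(X.sigma fun x => Y.erase x) := by
    rw [card_sigma]
    push_cast
    simpa using card_nsmul_le_sum X (fun x => (#(Y.erase x) : ℝ)) (#Y - 1)
      fun x _ => cast_card_sub_one_le_card_erase Y x
  have hembed : #(X.sigma fun x => Y.erase x) ≤
      {z : V × V × V × V | IsFourPath A S z ∧ z.2.1 = a ∧ z.2.2.1 = b}.ncard := by
    rw [← Set.ncard_coe_finset]
    refine Set.ncard_le_ncard_of_injOn (fun q => (q.1, a, b, q.2)) ?_ ?_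
    · rintro ⟨x, y⟩ hxy
      simp only [coe_sigma, Set.mem_sigma_iff, mem_coe, mem_erase, Set.mem_toFinset, X, Y] at hxy
      obtain ⟨⟨hxb, hxa, hx⟩, hyx, hya, hby, hy⟩ := hxy
      exact ⟨isFourPath_of_arcs hirr hxa hab hby hxb (Ne.symm hya) (Ne.symm hyx) hx ha hb hy,
        rfl, rfl⟩
    · rintro ⟨x, y⟩ - ⟨x', y'⟩ - h
      simp only [Prod.mk.injEq] at h
      rw [h.1, h.2.2.2]
  calc (d - 1) * (d - 2) ≤ #X * (#Y - 1) :=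
        mul_le_mul hX (by linarith) (by linarith) (by linarith)
    _ ≤ _ := hchoices.trans (by exact_mod_cast hembed)

end

theorem lt_arcsCount_of_not_satisfiesEC {V : Type*} [Fintype V] {A : V → V → Prop} {ε' : ℝ}
    (hA : ¬ SatisfiesEC A ε') {U₁ U₂ : Set V} (h₁ : (1/2 - ε') * Fintype.card V ≤ U₁.ncard)
    (h₂ : (1/2 - ε') * Fintype.card V ≤ U₂.ncard) :
    (ε' * Fintype.card V) ^ 2 < arcsCount A U₁ U₂ := by
  by_contra! h
  exact hA ⟨U₁, U₂, h₁, h₂, h⟩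

/-- **Lemma (many absorbers).**  For every `ε' ∈ (0,1)` there are `γ > 0` and `n₀` such
that for all `n ≥ n₀` and `k ≤ γn`: if `D` is a digraph on `n` vertices with
`δ⁰(D) ≥ n/2 + k` not satisfying **EC** with parameter `ε'`, and `W` is a set of at most
`2k` vertices, then for every ordered pair `(u, v)` of vertices of `D' = D - W` (possibly
`u = v`) there are at least `γ n⁴` distinct 4-paths of `D'` absorbing `(u, v)`. -/
theorem many_absorbing_four_paths (ε' : ℝ) (hε'0 : 0 < ε') (hε'1 : ε' < 1) :
    ∃ (γ : ℝ) (n₀ : ℕ), 0 < γ ∧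
      ∀ n k : ℕ, n₀ ≤ n → (k : ℝ) ≤ γ * n →
        ∀ (V : Type) [Fintype V] (A : V → V → Prop),
          (∀ v, ¬ A v v) →
          Fintype.card V = n →
          (∀ v : V, (n : ℝ) / 2 + k ≤ (outDeg A v : ℝ) ∧
                    (n : ℝ) / 2 + k ≤ (inDeg A v : ℝ)) →
          ¬ SatisfiesEC A ε' →
          ∀ W : Set V, W.ncard ≤ 2 * k →
            ∀ u v : V, u ∉ W → v ∉ W →
              γ * (n : ℝ)^4 ≤
                (({z : V × V × V × V | IsFourPath A Wᶜ z ∧ AbsorbsPair A z u v}).ncard : ℝ) := by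
  refine ⟨ε' ^ 2 / 16, 11, by positivity, ?_⟩
  intro n k hn hk V _ A hirr hcard hdeg hEC W hW u v _ _
  have hn11 : (11 : ℝ) ≤ n := by exact_mod_cast hn
  have hW' : (W.ncard : ℝ) ≤ 2 * k := by exact_mod_cast hW
  have hkε : (k : ℝ) ≤ ε' * n / 16 :=
    calc (k : ℝ) ≤ ε' ^ 2 / 16 * n := hk
      _ ≤ ε' / 16 * n := by gcongr; nlinarith
      _ = ε' * n / 16 := by ring
  have hk16 : (k : ℝ) ≤ n / 16 := hkε.trans (by nlinarith)
  have hin (a : V) : (n : ℝ) / 2 - k ≤ ({x | A x a} ∩ Wᶜ).ncard := by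
    have hdeg_a : (n : ℝ) / 2 + k ≤ {x | A x a}.ncard := (hdeg a).2
    linarith [ncard_sub_ncard_le_ncard_inter_compl {x | A x a} W.toFinite]
  have hout (b : V) : (n : ℝ) / 2 - k ≤ ({y | A b y} ∩ Wᶜ).ncard := by
    have hdeg_b : (n : ℝ) / 2 + k ≤ {y | A b y}.ncard := (hdeg b).1
    linarith [ncard_sub_ncard_le_ncard_inter_compl {y | A b y} W.toFinite]
  set absorbers := {z : V × V × V × V | IsFourPath A Wᶜ z ∧ AbsorbsPair A z u v}
  set arcs := {p : V × V | p.1 ∈ {x | A x u} ∩ Wᶜ ∧ p.2 ∈ {y | A v y} ∩ Wᶜ ∧ A p.1 p.2}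
  have harcs : (ε' * n) ^ 2 < arcs.ncard := by
    have h := lt_arcsCount_of_not_satisfiesEC hEC (U₁ := {x | A x u} ∩ Wᶜ) (U₂ := {y | A v y} ∩ Wᶜ)
      (by rw [hcard]; linarith [hin u]) (by rw [hcard]; linarith [hout v])
    rwa [hcard] at h
  have hfiber : ∀ p ∈ arcs, (n : ℝ) ^ 2 / 16 ≤ {z ∈ absorbers | (z.2.1, z.2.2.1) = p}.ncard := by
    rintro ⟨a, b⟩ ⟨⟨hau, ha⟩, ⟨hvb, hb⟩, hab⟩
    calc (n : ℝ) ^ 2 / 16 = (n / 4) * (n / 4) := by ring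
      _ ≤ (n / 2 - k - 1) * (n / 2 - k - 2) := by gcongr <;> linarith
      _ ≤ {z : V × V × V × V | IsFourPath A Wᶜ z ∧ z.2.1 = a ∧ z.2.2.1 = b}.ncard :=
          le_ncard_fourPaths_through_arc hirr hab ha hb (by linarith) (hin a) (hout b)
      _ ≤ {z ∈ absorbers | (z.2.1, z.2.2.1) = (a, b)}.ncard := by
          refine Nat.cast_le.mpr (Set.ncard_le_ncard ?_)
          rintro z ⟨hz, rfl, rfl⟩
          exact ⟨⟨hz, hau, hvb⟩, rfl⟩
  calc ε' ^ 2 / 16 * (n : ℝ) ^ 4 = (ε' * n) ^ 2 * (n ^ 2 / 16) := by ring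
    _ ≤ (arcs.ncard : ℝ) * (n ^ 2 / 16) := by gcongr
    _ ≤ (absorbers.ncard : ℝ) :=
        ncard_mul_le_ncard_of_le_ncard_fiber (fun z : V × V × V × V => (z.2.1, z.2.2.1)) hfiber
end

section
/- For every ε′ ∈ (0,1) there exist γ > 0 and n₀ such that the following holds for all n ≥ n₀ and all k ≤ γn. Let D be a digraph on n vertices with δ⁰(D) ≥ n/2 + k which does not satisfy the extremal condition EC with parameter ε′, let W ⊆ V(D) with |W| ≤ 2k, and set D′ = D − W. Then there exists a family F of at most γn pairwise vertex-disjoint absorbing 4-paths in D′ such that for every ordered vertex pair (u, v) of D′, at least γ²n members of F are absorbers for (u, v). -/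
open scoped Classical

/-!
The family is built greedily, one 4-path at a time, each avoiding `W` and the paths chosen
before. As long as fewer than `εn` vertices are used, stability gives more than `(εn)²` arcs `ab`
from `N⁻(u)` to `N⁺(v)`, and each extends to `(n/4)²` absorbers `xaby` of `(u, v)`; so a fraction
`c = ε²/16` of all available 4-paths absorbs any given pair. Choosing each path so as not to
increase the potential `∑_{(u,v)} 2^(-#absorbers of (u,v) chosen so far)` beyond its average over
the available paths multiplies it by at most `1 - c/2` per step (method of conditional
expectations). After `γn` steps it is below `2^(-γ²n)`, so every pair has more than `γ²n`
absorbers.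
-/

open Finset Filter

lemma exists_mem_sum_ite_half_le {α ι : Type*} {S : Finset α} (hS : S.Nonempty) (P : Finset ι)
    (w : ι → ℝ) (hw : ∀ i ∈ P, 0 ≤ w i) (Q : ι → α → Prop) [∀ i, DecidablePred (Q i)] {c : ℝ}
    (hQ : ∀ i ∈ P, c * #S ≤ #(S.filter (Q i))) :
    ∃ z ∈ S, ∑ i ∈ P, (if Q i z then w i / 2 else w i) ≤ (1 - c / 2) * ∑ i ∈ P, w i := by
  refine exists_le_of_sum_le hS ?_
  rw [sum_comm, sum_const, nsmul_eq_mul, mul_sum, mul_sum]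
  refine sum_le_sum fun i hi => ?_
  have hsplit : ∑ z ∈ S, (if Q i z then w i / 2 else w i) =
      #S * w i - #(S.filter (Q i)) * w i / 2 := by
    rw [sum_ite, sum_const, sum_const, nsmul_eq_mul, nsmul_eq_mul,
      ← card_filter_add_card_filter_not (s := S) (Q i)]
    push_cast
    ring
  rw [hsplit]
  nlinarith [hw i hi, hQ i hi]

lemma le_one_of_mul_card_le_card_filter {α : Type*} {S : Finset α} (hS : S.Nonempty)
    {p : α → Prop} [DecidablePred p] {c : ℝ} (h : c * #S ≤ #(S.filter p)) : c ≤ 1 := by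
  have hpos : (0 : ℝ) < #S := by exact_mod_cast hS.card_pos
  have hle : (#(S.filter p) : ℝ) ≤ #S := by exact_mod_cast card_filter_le S p
  by_contra! hc
  nlinarith

lemma sub_card_le_card_sdiff {α : Type*} [DecidableEq α] (s t : Finset α) :
    (#s : ℝ) - #t ≤ #(s \ t) := by
  have : (#s : ℝ) ≤ #(s \ t) + #t := by exact_mod_cast card_le_card_sdiff_add_card
  linarith

lemma quarter_le_card_sdiff {α : Type*} [DecidableEq α] {n : ℝ} {s t : Finset α}
    (hs : n / 2 ≤ #s) (ht : (#t : ℝ) ≤ n / 4) : n / 4 ≤ #(s \ t) := by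
  linarith [sub_card_le_card_sdiff s t]

lemma mul_le_card_sigma {ι : Type*} {κ : ι → Type*} (s : Finset ι) (t : ∀ i, Finset (κ i))
    {a : ℝ} (h : ∀ i ∈ s, a ≤ #(t i)) : #s * a ≤ #(s.sigma t) := by
  rw [card_sigma, Nat.cast_sum, ← nsmul_eq_mul]
  exact card_nsmul_le_sum s _ a h

/-- With `(1 - c/2)^m ≤ e^(-cm/2)` and `(1/2)^s ≥ e^(-s)`, the claim reduces to
`n² e^(-an) → 0` for `a = cγ/4`. -/
lemma eventually_sq_mul_pow_lt_half_pow {c γ : ℝ} (hc : 0 < c) (hc2 : c ≤ 2) (hγ : 0 < γ)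
    (hγc : γ ≤ c / 4) :
    ∀ᶠ n : ℕ in atTop, (n : ℝ) ^ 2 * (1 - c / 2) ^ ⌊γ * n⌋₊ < (1 / 2) ^ ⌊γ ^ 2 * n⌋₊ := by
  set a := c * γ / 4 with ha
  have hr : |Real.exp (-a)| < 1 := by
    rw [abs_of_pos (Real.exp_pos _), Real.exp_lt_one_iff, neg_lt_zero]; positivity
  filter_upwards [(tendsto_pow_const_mul_const_pow_of_abs_lt_one 2 hr).eventually_lt_const
    (Real.exp_pos (-(c / 2)))] with n hn
  have hfloor : γ * n - 1 ≤ ⌊γ * n⌋₊ := by linarith [Nat.lt_floor_add_one (γ * (n : ℝ))]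
  have hdecay : (1 - c / 2) ^ ⌊γ * n⌋₊ ≤ Real.exp (-a * n) * Real.exp (c / 2 - γ ^ 2 * n) := by
    calc (1 - c / 2) ^ ⌊γ * n⌋₊ ≤ Real.exp (-(c / 2)) ^ ⌊γ * n⌋₊ :=
          pow_le_pow_left₀ (by linarith) (by linarith [Real.add_one_le_exp (-(c / 2))]) _
      _ = Real.exp (-(c / 2) * ⌊γ * n⌋₊) := by rw [← Real.exp_nat_mul]; ring_nf
      _ ≤ Real.exp (-a * n) * Real.exp (c / 2 - γ ^ 2 * n) := by
          rw [← Real.exp_add]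
          gcongr
          nlinarith [mul_le_mul_of_nonneg_right hγc (by positivity : (0 : ℝ) ≤ γ * n),
            mul_le_mul_of_nonneg_left hfloor (by positivity : (0 : ℝ) ≤ c / 2)]
  have hhalf : Real.exp (-(γ ^ 2 * n)) ≤ (1 / 2) ^ ⌊γ ^ 2 * n⌋₊ := by
    calc Real.exp (-(γ ^ 2 * n)) ≤ Real.exp (-1) ^ ⌊γ ^ 2 * n⌋₊ := by
          rw [← Real.exp_nat_mul]
          gcongr
          linarith [Nat.floor_le (by positivity : (0 : ℝ) ≤ γ ^ 2 * n)]
      _ ≤ (1 / 2) ^ ⌊γ ^ 2 * n⌋₊ := by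
          gcongr
          rw [Real.exp_neg, one_div]
          gcongr
          linarith [Real.add_one_le_exp (1 : ℝ)]
  rw [← Real.exp_nat_mul, mul_comm _ (-a)] at hn
  calc (n : ℝ) ^ 2 * (1 - c / 2) ^ ⌊γ * n⌋₊
      ≤ (n : ℝ) ^ 2 * Real.exp (-a * n) * Real.exp (c / 2 - γ ^ 2 * n) := by
        rw [mul_assoc]; gcongr
    _ < Real.exp (-(c / 2)) * Real.exp (c / 2 - γ ^ 2 * n) := by gcongr
    _ = Real.exp (-(γ ^ 2 * n)) := by rw [← Real.exp_add]; ring_nf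
    _ ≤ _ := hhalf

section Digraph

variable {V : Type*} {A : V → V → Prop}

lemma arcsCount_coe_finset (S T : Finset V) :
    arcsCount A ↑S ↑T = #((S ×ˢ T).filter fun p => A p.1 p.2) := by
  rw [arcsCount, ← Set.ncard_coe_finset]; congr; ext; simp [and_assoc]

lemma isFourPath_of_arcs_s9 (hirr : ∀ x, ¬ A x x) {S : Set V} {a b c d : V} (hab : A a b)
    (hbc : A b c) (hcd : A c d) (hac : a ≠ c) (hbd : b ≠ d) (had : a ≠ d)
    (ha : a ∈ S) (hb : b ∈ S) (hc : c ∈ S) (hd : d ∈ S) : IsFourPath A S (a, b, c, d) := by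
  have hne : ∀ {x y}, A x y → x ≠ y := fun hxy h => hirr _ (h ▸ hxy)
  refine ⟨?_, ?_, ?_⟩
  · simp [quadList, hne hab, hne hbc, hne hcd, hac, hbd, had]
  · show List.IsChain A [a, b, c, d]
    simp [hab, hbc, hcd]
  · simp [quadList, ha, hb, hc, hd]

section
variable (A)

noncomputable def vertexSet (F : Finset (V × V × V × V)) : Finset V :=
  F.biUnion fun z => (quadList z).toFinset

def IsPathPacking (W : Finset V) (F : Finset (V × V × V × V)) : Prop :=
  (∀ z ∈ F, IsFourPath A (↑W)ᶜ z) ∧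
    (F : Set (V × V × V × V)).Pairwise fun z z' => (quadList z).Disjoint (quadList z')

noncomputable def absorbCount (F : Finset (V × V × V × V)) (u v : V) : ℕ :=
  #(F.filter fun z => AbsorbsPair A z u v)

end

lemma card_union_vertexSet_le (W : Finset V) (F : Finset (V × V × V × V)) :
    #(W ∪ vertexSet F) ≤ #W + 4 * #F := by
  refine (card_union_le _ _).trans (Nat.add_le_add_left ?_ _)
  refine card_biUnion_le.trans ?_
  rw [mul_comm, ← smul_eq_mul, ← sum_const]
  exact sum_le_sum fun z _ => (quadList z).toFinset_card_le

lemma IsPathPacking.insert {W : Finset V} {F : Finset (V × V × V × V)} {z : V × V × V × V}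
    (hF : IsPathPacking A W F) (hz : IsFourPath A (↑(W ∪ vertexSet F))ᶜ z) :
    z ∉ F ∧ IsPathPacking A W (insert z F) := by
  have hfresh : ∀ z' ∈ F, (quadList z).Disjoint (quadList z') := fun z' hz' x hx hx' =>
    hz.2.2 x hx (by simp only [coe_union, Set.mem_union, mem_coe, vertexSet, mem_biUnion,
      List.mem_toFinset]; exact Or.inr ⟨z', hz', hx'⟩)
  refine ⟨fun hzF => hfresh z hzF (a := z.1) (by simp [quadList]) (by simp [quadList]),
    ?_, ?_⟩
  · refine forall_mem_insert _ _ _ |>.2 ⟨⟨hz.1, hz.2.1, fun x hx => ?_⟩, hF.1⟩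
    exact fun hxW => hz.2.2 x hx (by simp [hxW])
  · rw [coe_insert, Set.pairwise_insert]
    exact ⟨hF.2, fun z' hz' _ => ⟨hfresh z' hz', (hfresh z' hz').symm⟩⟩

lemma absorbCount_insert {F : Finset (V × V × V × V)} {z : V × V × V × V} (hz : z ∉ F)
    (u v : V) : absorbCount A (insert z F) u v =
      absorbCount A F u v + if AbsorbsPair A z u v then 1 else 0 := by
  unfold absorbCount
  rw [filter_insert]
  split_ifs with h
  · rw [card_insert_of_notMem (fun h' => hz (mem_filter.1 h').1)]
  · rfl

lemma ncard_absorbsPair_eq_absorbCount (F : Finset (V × V × V × V)) (u v : V) :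
    {z ∈ (F : Set (V × V × V × V)) | AbsorbsPair A z u v}.ncard = absorbCount A F u v := by
  rw [absorbCount, ← Set.ncard_coe_finset, coe_filter]; rfl

variable [Fintype V]

section
variable (A)

noncomputable def outNbrs (x : V) : Finset V := univ.filter (A x)

noncomputable def inNbrs (x : V) : Finset V := univ.filter (A · x)

noncomputable def fourPathsAvoiding (U : Finset V) : Finset (V × V × V × V) :=
  univ.filter (IsFourPath A (↑U)ᶜ)

noncomputable def absorbersAvoiding (U : Finset V) (u v : V) : Finset (V × V × V × V) :=
  (fourPathsAvoiding A U).filter fun z => AbsorbsPair A z u v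

noncomputable def absorbPotential (F : Finset (V × V × V × V)) : ℝ :=
  ∑ p : V × V, (1 / 2) ^ absorbCount A F p.1 p.2

end

lemma outDeg_eq_card_outNbrs (x : V) : outDeg A x = #(outNbrs A x) := by
  rw [outDeg, ← Set.ncard_coe_finset]; congr; ext; simp [outNbrs]

lemma inDeg_eq_card_inNbrs (x : V) : inDeg A x = #(inNbrs A x) := by
  rw [inDeg, ← Set.ncard_coe_finset]; congr; ext; simp [inNbrs]

lemma SatisfiesEC.mono {ε ε' : ℝ} (h : SatisfiesEC A ε) (hε : 0 ≤ ε) (hεε' : ε ≤ ε') :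
    SatisfiesEC A ε' := by
  obtain ⟨U₁, U₂, h₁, h₂, h₁₂⟩ := h
  refine ⟨U₁, U₂, le_trans ?_ h₁, le_trans ?_ h₂, h₁₂.trans ?_⟩ <;> gcongr

lemma lt_card_arcs_of_not_satisfiesEC {ε : ℝ} (hEC : ¬ SatisfiesEC A ε) {S T : Finset V}
    (hS : (1 / 2 - ε) * Fintype.card V ≤ #S) (hT : (1 / 2 - ε) * Fintype.card V ≤ #T) :
    (ε * Fintype.card V) ^ 2 < #((S ×ˢ T).filter fun p => A p.1 p.2) := by
  by_contra! h
  exact hEC ⟨S, T, by simpa using hS, by simpa using hT, by rwa [arcsCount_coe_finset]⟩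

lemma mem_fourPathsAvoiding {U : Finset V} {z : V × V × V × V} :
    z ∈ fourPathsAvoiding A U ↔ IsFourPath A (↑U)ᶜ z := by
  simp [fourPathsAvoiding]

lemma mem_absorbersAvoiding {U : Finset V} {u v : V} {z : V × V × V × V} :
    z ∈ absorbersAvoiding A U u v ↔ IsFourPath A (↑U)ᶜ z ∧ AbsorbsPair A z u v := by
  rw [absorbersAvoiding, Finset.mem_filter, mem_fourPathsAvoiding]

lemma card_fourPathsAvoiding_le (U : Finset V) :
    #(fourPathsAvoiding A U) ≤ Fintype.card V ^ 4 :=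
  (card_le_univ _).trans_eq (by simp only [Fintype.card_prod]; ring)

/-- The absorbers counted are the paths `xaby` with `ab` an arc from `N⁻(u)` to `N⁺(v)`:
`x ∈ N⁻(a)` and `y ∈ N⁺(b)` each have `n/4` choices outside `U`. -/
theorem card_absorbersAvoiding_ge (hirr : ∀ x, ¬ A x x)
    (hdeg : ∀ x, (Fintype.card V : ℝ) / 2 ≤ #(outNbrs A x) ∧
      (Fintype.card V : ℝ) / 2 ≤ #(inNbrs A x))
    {ε : ℝ} (hEC : ¬ SatisfiesEC A ε) {U : Finset V} (hUε : (#U : ℝ) ≤ ε * Fintype.card V)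
    (hU : (#U : ℝ) + 2 ≤ Fintype.card V / 4) (u v : V) :
    (ε * Fintype.card V) ^ 2 * (Fintype.card V / 4) ^ 2 ≤ #(absorbersAvoiding A U u v) := by
  set n : ℝ := (Fintype.card V : ℝ)
  have hins : ∀ (x : V) (t : Finset V), (#(insert x t) : ℝ) ≤ #t + 1 := fun x t => by
    exact_mod_cast card_insert_le x t
  set P := ((inNbrs A u \ U) ×ˢ (outNbrs A v \ U)).filter fun p => A p.1 p.2
  have hP : (ε * n) ^ 2 < #P := lt_card_arcs_of_not_satisfiesEC hEC
    (by linarith [sub_card_le_card_sdiff (inNbrs A u) U, (hdeg u).2])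
    (by linarith [sub_card_le_card_sdiff (outNbrs A v) U, (hdeg v).1])
  set E := P.sigma fun p => (inNbrs A p.1 \ insert p.2 U).sigma
    fun x => outNbrs A p.2 \ insert x (insert p.1 U)
  have hE : #P * (n / 4 * (n / 4)) ≤ #E := mul_le_card_sigma _ _ fun p _ => by
    have h₁ : n / 4 ≤ #(inNbrs A p.1 \ insert p.2 U) :=
      quarter_le_card_sdiff (hdeg p.1).2 (by linarith [hins p.2 U])
    refine le_trans ?_ (mul_le_card_sigma _ _ fun x _ => quarter_le_card_sdiff (hdeg p.2).1
      (by linarith [hins x (insert p.1 U), hins p.1 U]))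
    gcongr
  have hinj : #E ≤ #(absorbersAvoiding A U u v) := by
    refine card_le_card_of_injOn (fun t => (t.2.1, t.1.1, t.1.2, t.2.2)) ?_ ?_
    · rintro ⟨⟨a, b⟩, x, y⟩ ht
      simp only [SetLike.mem_coe, E, P, mem_sigma, mem_filter, mem_product, Finset.mem_sdiff,
        Finset.mem_insert, inNbrs, outNbrs, mem_univ, true_and, not_or] at ht
      obtain ⟨⟨⟨⟨hau, haU⟩, hvb, hbU⟩, hab⟩, ⟨hxa, hxb, hxU⟩, hby, hyx, hya, hyU⟩ := ht
      show (x, a, b, y) ∈ absorbersAvoiding A U u v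
      exact mem_absorbersAvoiding.2 ⟨isFourPath_of_arcs_s9 hirr hxa hab hby hxb (Ne.symm hya)
        (Ne.symm hyx) hxU haU hbU hyU, hau, hvb⟩
    · rintro ⟨⟨a, b⟩, x, y⟩ _ ⟨⟨a', b'⟩, x', y'⟩ _ h
      simp only [Prod.mk.injEq] at h
      obtain ⟨rfl, rfl, rfl, rfl⟩ := h
      rfl
  calc (ε * n) ^ 2 * (n / 4) ^ 2 ≤ #P * (n / 4 * (n / 4)) := by
        rw [← sq]; gcongr
    _ ≤ #(absorbersAvoiding A U u v) := hE.trans (by exact_mod_cast hinj)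

variable (A) in
lemma exists_insert_absorbPotential_le {W : Finset V} {F : Finset (V × V × V × V)} {c : ℝ}
    (hF : IsPathPacking A W F) (hne : (fourPathsAvoiding A (W ∪ vertexSet F)).Nonempty)
    (hratio : ∀ u v, c * #(fourPathsAvoiding A (W ∪ vertexSet F)) ≤
      #(absorbersAvoiding A (W ∪ vertexSet F) u v)) :
    ∃ z ∉ F, IsPathPacking A W (insert z F) ∧
      absorbPotential A (insert z F) ≤ (1 - c / 2) * absorbPotential A F := by
  obtain ⟨z, hz, hle⟩ := exists_mem_sum_ite_half_le hne univ
    (fun p : V × V => (1 / 2 : ℝ) ^ absorbCount A F p.1 p.2) (fun _ _ => by positivity)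
    (fun p z => AbsorbsPair A z p.1 p.2) (fun p _ => hratio p.1 p.2)
  obtain ⟨hzF, hpack⟩ := hF.insert (mem_fourPathsAvoiding.1 hz)
  refine ⟨z, hzF, hpack, le_of_eq_of_le (sum_congr rfl fun p _ => ?_) hle⟩
  rw [absorbCount_insert hzF]
  split_ifs <;> simp [pow_succ, div_eq_mul_inv]

variable (A) in
lemma exists_isPathPacking_absorbPotential_le (W : Finset V) {B : ℕ} {c : ℝ}
    (hne : ∀ U : Finset V, #U ≤ B → (fourPathsAvoiding A U).Nonempty)
    (hratio : ∀ U : Finset V, #U ≤ B → ∀ u v,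
      c * #(fourPathsAvoiding A U) ≤ #(absorbersAvoiding A U u v)) :
    ∀ m, #W + 4 * m ≤ B → ∃ F, #F = m ∧ IsPathPacking A W F ∧
      absorbPotential A F ≤ Fintype.card (V × V) * (1 - c / 2) ^ m
  | 0, _ => ⟨∅, rfl, ⟨by simp, by simp⟩, by simp [absorbPotential, absorbCount]⟩
  | m + 1, hB => by
    obtain ⟨F, hcard, hF, hpot⟩ :=
      exists_isPathPacking_absorbPotential_le W hne hratio m (by omega)
    have hU : #(W ∪ vertexSet F) ≤ B := by have := card_union_vertexSet_le W F; omega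
    obtain ⟨z, hzF, hpack, hstep⟩ :=
      exists_insert_absorbPotential_le A hF (hne _ hU) (hratio _ hU)
    refine ⟨insert z F, by rw [card_insert_of_notMem hzF, hcard], hpack, hstep.trans ?_⟩
    have hc : 0 ≤ 1 - c / 2 := by
      linarith [le_one_of_mul_card_le_card_filter (hne _ hU) (hratio _ hU z.1 z.1)]
    calc (1 - c / 2) * absorbPotential A F
        ≤ (1 - c / 2) * (Fintype.card (V × V) * (1 - c / 2) ^ m) := by gcongr
      _ = _ := by ring

lemma lt_absorbCount_of_absorbPotential_lt {F : Finset (V × V × V × V)} {s : ℕ}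
    (h : absorbPotential A F < (1 / 2) ^ s) (u v : V) : s < absorbCount A F u v := by
  by_contra! hle
  have hterm : (1 / 2 : ℝ) ^ absorbCount A F u v ≤ absorbPotential A F :=
    single_le_sum (f := fun p : V × V => (1 / 2 : ℝ) ^ absorbCount A F p.1 p.2)
      (fun _ _ => by positivity) (mem_univ (u, v))
  linarith [pow_le_pow_of_le_one (by norm_num : (0 : ℝ) ≤ 1 / 2) (by norm_num) hle]

theorem exists_isPathPacking_lt_absorbCount (hirr : ∀ x, ¬ A x x)
    (hdeg : ∀ x, (Fintype.card V : ℝ) / 2 ≤ #(outNbrs A x) ∧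
      (Fintype.card V : ℝ) / 2 ≤ #(inNbrs A x))
    {ε : ℝ} (hε : 0 < ε) (hEC : ¬ SatisfiesEC A ε) (W : Finset V) (m s : ℕ)
    (hWε : (#W + 4 * m : ℝ) ≤ ε * Fintype.card V)
    (hWn : (#W + 4 * m : ℝ) + 2 ≤ Fintype.card V / 4)
    (hnum : (Fintype.card V : ℝ) ^ 2 * (1 - ε ^ 2 / 16 / 2) ^ m < (1 / 2) ^ s) :
    ∃ F, #F = m ∧ IsPathPacking A W F ∧ ∀ u v, s < absorbCount A F u v := by
  have hn : (0 : ℝ) < Fintype.card V := by linarith [(by positivity : (0 : ℝ) ≤ #W + 4 * m)]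
  obtain ⟨w⟩ : Nonempty V := Fintype.card_pos_iff.1 (by exact_mod_cast hn)
  have habs : ∀ U : Finset V, #U ≤ #W + 4 * m → ∀ u v,
      (ε * Fintype.card V) ^ 2 * (Fintype.card V / 4) ^ 2 ≤ #(absorbersAvoiding A U u v) :=
    fun U hU => by
      have hU' : (#U : ℝ) ≤ #W + 4 * m := by exact_mod_cast hU
      exact card_absorbersAvoiding_ge hirr hdeg hEC (hU'.trans hWε) (by linarith)
  have hratio : ∀ U : Finset V, #U ≤ #W + 4 * m → ∀ u v,
      ε ^ 2 / 16 * #(fourPathsAvoiding A U) ≤ #(absorbersAvoiding A U u v) := fun U hU u v => by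
    have : (#(fourPathsAvoiding A U) : ℝ) ≤ Fintype.card V ^ 4 := by
      exact_mod_cast card_fourPathsAvoiding_le U
    calc ε ^ 2 / 16 * #(fourPathsAvoiding A U) ≤ ε ^ 2 / 16 * Fintype.card V ^ 4 := by gcongr
      _ = (ε * Fintype.card V) ^ 2 * (Fintype.card V / 4) ^ 2 := by ring
      _ ≤ _ := habs U hU u v
  have hne : ∀ U : Finset V, #U ≤ #W + 4 * m → (fourPathsAvoiding A U).Nonempty := fun U hU =>
    have hpos : (0 : ℝ) < #(absorbersAvoiding A U w w) :=
      lt_of_lt_of_le (by positivity) (habs U hU w w)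
    (card_pos.1 (Nat.cast_pos.1 hpos)).mono (filter_subset _ _)
  obtain ⟨F, hcard, hF, hpot⟩ :=
    exists_isPathPacking_absorbPotential_le A W hne hratio m le_rfl
  refine ⟨F, hcard, hF, lt_absorbCount_of_absorbPotential_lt (hpot.trans_lt ?_)⟩
  simpa [Fintype.card_prod, sq] using hnum

end Digraph

theorem absorbing_family_exists_general (ε' : ℝ) (hε'0 : 0 < ε') :
    ∃ (γ : ℝ) (n₀ : ℕ), 0 < γ ∧
      ∀ n k : ℕ, n₀ ≤ n → (k : ℝ) ≤ γ * n →
        ∀ (V : Type) [Fintype V] (A : V → V → Prop),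
          (∀ v, ¬ A v v) →
          Fintype.card V = n →
          (∀ v : V, (n : ℝ) / 2 + k ≤ (outDeg A v : ℝ) ∧
                    (n : ℝ) / 2 + k ≤ (inDeg A v : ℝ)) →
          ¬ SatisfiesEC A ε' →
          ∀ W : Set V, W.ncard ≤ 2 * k →
            ∃ F : Set (V × V × V × V),
              (F.ncard : ℝ) ≤ γ * n ∧
              (∀ z ∈ F, IsFourPath A Wᶜ z) ∧
              (∀ z ∈ F, ∀ z' ∈ F, z ≠ z' → ∀ x ∈ quadList z, x ∉ quadList z') ∧
              ∀ u v : V, u ∉ W → v ∉ W →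
                γ^2 * n ≤ (({z ∈ F | AbsorbsPair A z u v}).ncard : ℝ) := by
  set ε := min ε' (1 / 8)
  have hε : 0 < ε := lt_min hε'0 (by norm_num)
  have hε8 : ε ≤ 1 / 8 := min_le_right _ _
  set γ := ε ^ 2 / 16 / 4
  have hγ : 0 < γ := by positivity
  obtain ⟨n₀, hn₀⟩ := ((eventually_sq_mul_pow_lt_half_pow (c := ε ^ 2 / 16) (by positivity)
    (by nlinarith) hγ le_rfl).and (eventually_ge_atTop 16)).exists_forall_of_atTop
  refine ⟨γ, n₀, hγ, fun n k hn hk V _ A hirr hcard hdeg hEC W hW => ?_⟩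
  subst hcard
  obtain ⟨hnum, hn16⟩ := hn₀ _ hn
  have hW' : (#W.toFinset : ℝ) ≤ 2 * k := by
    rw [← Set.ncard_eq_toFinset_card']; exact_mod_cast hW
  have hm : (⌊γ * Fintype.card V⌋₊ : ℝ) ≤ γ * Fintype.card V := Nat.floor_le (by positivity)
  have h16 : (16 : ℝ) ≤ Fintype.card V := by exact_mod_cast hn16
  have hB : (#W.toFinset + 4 * ⌊γ * Fintype.card V⌋₊ : ℝ) ≤ ε / 8 * Fintype.card V := by
    have h6γ : 6 * γ ≤ ε / 8 := by simp only [γ]; nlinarith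
    nlinarith [mul_le_mul_of_nonneg_right h6γ (Nat.cast_nonneg (Fintype.card V))]
  obtain ⟨F, hcard, hF, hcount⟩ := exists_isPathPacking_lt_absorbCount hirr
    (fun x => by
      rw [← outDeg_eq_card_outNbrs, ← inDeg_eq_card_inNbrs]
      constructor <;> linarith [hdeg x])
    hε (fun h => hEC (h.mono hε.le (min_le_left _ _))) W.toFinset _ _
    (by nlinarith) (by nlinarith) hnum
  refine ⟨F, by rw [Set.ncard_coe_finset, hcard]; exact hm, fun z hz => by simpa using hF.1 z hz,
    fun z hz z' hz' hne => hF.2 hz hz' hne, fun u v _ _ => ?_⟩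
  rw [ncard_absorbsPair_eq_absorbCount]
  exact (Nat.lt_floor_add_one _).le.trans (by exact_mod_cast hcount u v)

/-- **Lemma (absorbing family).**  For every `ε' ∈ (0,1)` there are `γ > 0` and `n₀` such
that for all `n ≥ n₀` and `k ≤ γn`: if `D` is a digraph on `n` vertices with
`δ⁰(D) ≥ n/2 + k` not satisfying **EC** with parameter `ε'`, and `W` is a set of at most
`2k` vertices, then `D' = D - W` contains a family `F` of at most `γn` pairwise
vertex-disjoint absorbing 4-paths such that every ordered vertex pair `(u, v)` of `D'`
has at least `γ²n` absorbers in `F`. -/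
theorem absorbing_family_exists (ε' : ℝ) (hε'0 : 0 < ε') (hε'1 : ε' < 1) :
    ∃ (γ : ℝ) (n₀ : ℕ), 0 < γ ∧
      ∀ n k : ℕ, n₀ ≤ n → (k : ℝ) ≤ γ * n →
        ∀ (V : Type) [Fintype V] (A : V → V → Prop),
          (∀ v, ¬ A v v) →
          Fintype.card V = n →
          (∀ v : V, (n : ℝ) / 2 + k ≤ (outDeg A v : ℝ) ∧
                    (n : ℝ) / 2 + k ≤ (inDeg A v : ℝ)) →
          ¬ SatisfiesEC A ε' →
          ∀ W : Set V, W.ncard ≤ 2 * k →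
            ∃ F : Set (V × V × V × V),
              (F.ncard : ℝ) ≤ γ * n ∧
              (∀ z ∈ F, IsFourPath A Wᶜ z) ∧
              (∀ z ∈ F, ∀ z' ∈ F, z ≠ z' → ∀ x ∈ quadList z, x ∉ quadList z') ∧
              ∀ u v : V, u ∉ W → v ∉ W →
                γ^2 * n ≤ (({z ∈ F | AbsorbsPair A z u v}).ncard : ℝ) :=
  absorbing_family_exists_general ε' hε'0
end

section
/- For every ε′ ∈ (0,1) there exist γ > 0 and n₀ such that the following holds for all n ≥ n₀ and all k ≤ γn. Let D be a digraph on n vertices with δ⁰(D) ≥ n/2 + k which does not satisfy the extremal condition EC with parameter ε′, let W ⊆ V(D) with |W| ≤ 2k, set D′ = D − W, and let F be a family of at most γn pairwise vertex-disjoint 4-paths in D′. Then for any partition F = F_1 ∪ … ∪ F_s with F_i = {F_{i,1}, …, F_{i,l_i}}, there exist pairwise vertex-disjoint directed paths L_1, …, L_s in D′ such that for each i, L_i = F_{i,1} ∘ P_{i,1} ∘ F_{i,2} ∘ ⋯ ∘ F_{i,l_i−1} ∘ P_{i,l_i−1} ∘ F_{i,l_i}, where each connecting path P_{i,j} has length at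 most 3. -/
open scoped Classical

/-!
The 4-paths of each part are linked greedily: the last vertex `b` of a 4-path is joined to the
first vertex `d` of the next one by a path `b u v d` through two new vertices. As long as the
vertices in use (those of `W`, of the 4-paths and of earlier connectors) number at most
`k + ε' n`, the unused out-neighbours of `b` and the unused in-neighbours of `d` both number at
least `(1/2 - ε') n`, so the failure of EC gives an arc `u → v` between them. With `γ = ε'/16`
at most `2k + 6γn` vertices are ever in use, which stays within that budget.
-/

open Function

namespace List

variable {α : Type*} {R : α → α → Prop} {m : ℕ} {X : Fin m → List α}

lemma isChain_flatten_ofFn (hne : ∀ j, X j ≠ []) (hX : ∀ j, (X j).IsChain R)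
    (hlink : ∀ (j : ℕ) (h : j + 1 < m), ∀ x ∈ (X ⟨j, Nat.lt_of_succ_lt h⟩).getLast?,
      ∀ y ∈ (X ⟨j + 1, h⟩).head?, R x y) :
    (ofFn X).flatten.IsChain R := by
  rw [isChain_flatten (by simpa [mem_ofFn, eq_comm] using hne), isChain_ofFn]
  exact ⟨by simpa [mem_ofFn] using hX, hlink⟩

lemma nodup_flatten_ofFn (hX : ∀ j, (X j).Nodup)
    (hdisj : _root_.Pairwise fun j j' => (X j).Disjoint (X j')) : (ofFn X).flatten.Nodup := by
  rw [nodup_flatten, pairwise_ofFn]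
  exact ⟨by simpa [mem_ofFn] using hX, fun _ _ h => hdisj h.ne⟩

end List

section Linking

variable {V : Type*}

/-- The path `b → c.1 → c.2 → d` of `A`, whose interior vertices `c.1, c.2` avoid `B`. -/
structure IsConnector (A : V → V → Prop) (B : Set V) (b d : V) (c : V × V) : Prop where
  arc_fst : A b c.1
  arc_mid : A c.1 c.2
  arc_snd : A c.2 d
  fst_notMem : c.1 ∉ B
  snd_notMem : c.2 ∉ B
  fst_ne_snd : c.1 ≠ c.2

variable {A : V → V → Prop}

lemma IsConnector.mono {B B' : Set V} {b d : V} {c : V × V} (h : IsConnector A B b d c)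
    (hB : B' ⊆ B) : IsConnector A B' b d c :=
  { h with
    fst_notMem := fun hx => h.fst_notMem (hB hx)
    snd_notMem := fun hx => h.snd_notMem (hB hx) }

lemma IsConnector.isChain_quadList_append {B : Set V} {q : V × V × V × V} {d : V}
    {c : V × V} (h : IsConnector A B q.2.2.2 d c) (hq : (quadList q).IsChain A) :
    (quadList q ++ [c.1, c.2]).IsChain A := by
  simp_all [quadList, h.arc_fst, h.arc_mid]

lemma IsConnector.nodup_quadList_append {B : Set V} {q : V × V × V × V} {d : V}
    {c : V × V} (h : IsConnector A B q.2.2.2 d c) (hq : (quadList q).Nodup)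
    (hqB : ∀ x ∈ quadList q, x ∈ B) :
    (quadList q ++ [c.1, c.2]).Nodup := by
  rw [List.nodup_append]
  refine ⟨hq, by simp [h.fst_ne_snd], ?_⟩
  rintro x hx y hy rfl
  simp only [List.mem_cons, List.not_mem_nil, or_false] at hy
  rcases hy with rfl | rfl
  exacts [h.fst_notMem (hqB _ hx), h.snd_notMem (hqB _ hx)]

lemma ncard_iUnion_quadList_le {I : Type*} [Fintype I] (q : I → V × V × V × V) :
    (⋃ σ, ((quadList (q σ)).toFinset : Set V)).ncard ≤ 4 * Fintype.card I := by
  calc _ = (⋃ σ ∈ Finset.univ, ((quadList (q σ)).toFinset : Set V)).ncard := by simp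
    _ ≤ ∑ σ, ((quadList (q σ)).toFinset : Set V).ncard := Finset.set_ncard_biUnion_le _ _
    _ ≤ ∑ _σ : I, 4 := Finset.sum_le_sum fun σ _ => by
        rw [Set.ncard_coe_finset]
        exact (List.toFinset_card_le _).trans (by simp [quadList])
    _ = 4 * Fintype.card I := by simp [mul_comm]

section Assembly

variable {W B : Set V} {s : ℕ} {l : Fin s → ℕ}
  {Q : (i : Fin s) → Fin (l i) → V × V × V × V} {c : (Σ i, Fin (l i)) → V × V}
  {d : (Σ i, Fin (l i)) → V}

abbrev pathBlock (Q : (i : Fin s) → Fin (l i) → V × V × V × V)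
    (c : (Σ i, Fin (l i)) → V × V) (σ : Σ i, Fin (l i)) : List V :=
  quadList (Q σ.1 σ.2) ++ [(c σ).1, (c σ).2]

lemma pathBlock_pairwise_disjoint
    (hQdisj : ∀ p q : Σ i, Fin (l i), p ≠ q →
      ∀ x ∈ quadList (Q p.1 p.2), x ∉ quadList (Q q.1 q.2))
    (hQB : ∀ i j, ∀ x ∈ quadList (Q i j), x ∈ B)
    (hc : ∀ σ, IsConnector A B (Q σ.1 σ.2).2.2.2 (d σ) (c σ))
    (hcdisj : Pairwise (Disjoint on fun σ => ({(c σ).1, (c σ).2} : Set V))) :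
    Pairwise fun σ τ => (pathBlock Q c σ).Disjoint (pathBlock Q c τ) := by
  have hmem : ∀ σ x, x ∈ pathBlock Q c σ →
      x ∈ quadList (Q σ.1 σ.2) ∨ x ∈ ({(c σ).1, (c σ).2} : Set V) := by
    simp
  have hpairB : ∀ σ, ∀ x ∈ ({(c σ).1, (c σ).2} : Set V), x ∉ B := by
    rintro σ x (rfl | rfl)
    exacts [(hc σ).fst_notMem, (hc σ).snd_notMem]
  intro σ τ hne x hxσ hxτ
  rcases hmem σ x hxσ with hσ | hσ <;> rcases hmem τ x hxτ with hτ | hτ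
  · exact hQdisj σ τ hne x hσ hτ
  · exact hpairB τ x hτ (hQB _ _ x hσ)
  · exact hpairB σ x hσ (hQB _ _ x hτ)
  · exact Set.disjoint_left.1 (hcdisj hne) hσ hτ

lemma notMem_of_mem_pathBlock (hQ : ∀ i j, IsFourPath A Wᶜ (Q i j)) (hWB : W ⊆ B)
    (hc : ∀ σ, IsConnector A B (Q σ.1 σ.2).2.2.2 (d σ) (c σ)) {σ : Σ i, Fin (l i)} {x : V}
    (hx : x ∈ pathBlock Q c σ) : x ∉ W := by
  intro hxW
  rcases List.mem_append.1 hx with hq | hp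
  · exact (hQ σ.1 σ.2).2.2 x hq hxW
  · simp only [List.mem_cons, List.not_mem_nil, or_false] at hp
    rcases hp with rfl | rfl
    exacts [(hc σ).fst_notMem (hWB hxW), (hc σ).snd_notMem (hWB hxW)]

lemma exists_linkedPaths_of_connectors (hQ : ∀ i j, IsFourPath A Wᶜ (Q i j))
    (hQdisj : ∀ p q : Σ i, Fin (l i), p ≠ q →
      ∀ x ∈ quadList (Q p.1 p.2), x ∉ quadList (Q q.1 q.2))
    (hWB : W ⊆ B) (hQB : ∀ i j, ∀ x ∈ quadList (Q i j), x ∈ B)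
    (hc : ∀ σ, IsConnector A B (Q σ.1 σ.2).2.2.2 (d σ) (c σ))
    (hcdisj : Pairwise (Disjoint on fun σ => ({(c σ).1, (c σ).2} : Set V)))
    (hd : ∀ (σ : Σ i, Fin (l i)) (h : σ.2 + 1 < l σ.1), d σ = (Q σ.1 ⟨σ.2 + 1, h⟩).1) :
    ∃ (L : Fin s → List V) (C : (i : Fin s) → Fin (l i) → List V),
      (∀ i, (L i).IsChain A ∧ (L i).Nodup ∧ ∀ x ∈ L i, x ∉ W) ∧
      (∀ i i', i ≠ i' → ∀ x ∈ L i, x ∉ L i') ∧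
      (∀ i, L i = (List.ofFn fun j => quadList (Q i j) ++ C i j).flatten) ∧
      (∀ i j, (C i j).length ≤ 2) ∧
      (∀ i (j : Fin (l i)), l i ≤ j + 1 → C i j = []) := by
  set C : (i : Fin s) → Fin (l i) → List V := fun i j =>
    if (j : ℕ) + 1 < l i then [(c ⟨i, j⟩).1, (c ⟨i, j⟩).2] else []
  have hprefix : ∀ i j, quadList (Q i j) ++ C i j <+: pathBlock Q c ⟨i, j⟩ := by
    intro i j
    simp only [C, pathBlock, List.prefix_append_right_inj]
    split_ifs <;> simp
  have hsub : ∀ i j, ∀ x ∈ quadList (Q i j) ++ C i j, x ∈ pathBlock Q c ⟨i, j⟩ :=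
    fun i j _ hx => (hprefix i j).subset hx
  have hdisj := pathBlock_pairwise_disjoint hQdisj hQB hc hcdisj
  have hmem : ∀ i x, x ∈ (List.ofFn fun j => quadList (Q i j) ++ C i j).flatten ↔
      ∃ j, x ∈ quadList (Q i j) ++ C i j := by
    simp [List.mem_flatten, List.mem_ofFn]
  refine ⟨fun i => (List.ofFn fun j => quadList (Q i j) ++ C i j).flatten, C,
    fun i => ⟨?_, ?_, ?_⟩, ?_, fun _ => rfl, ?_, ?_⟩
  · refine List.isChain_flatten_ofFn (by simp [quadList])
      (fun j => ((hc ⟨i, j⟩).isChain_quadList_append (hQ i j).2.1).prefix (hprefix i j)) ?_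
    intro j h x hx y hy
    have harc := (hc ⟨i, ⟨j, Nat.lt_of_succ_lt h⟩⟩).arc_snd
    rw [hd _ h] at harc
    simp [C, h, quadList] at hx hy
    rwa [← hx, ← hy]
  · refine List.nodup_flatten_ofFn (fun j => ?_) fun j j' hjj' x hx hx' => ?_
    · exact ((hc ⟨i, j⟩).nodup_quadList_append (hQ i j).1 (hQB i j)).sublist
        (hprefix i j).sublist
    · exact hdisj (i := ⟨i, j⟩) (j := ⟨i, j'⟩) (by simpa using hjj')
        (hsub i j x hx) (hsub i j' x hx')
  · intro x hx
    obtain ⟨j, hj⟩ := (hmem i x).1 hx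
    exact notMem_of_mem_pathBlock hQ hWB hc (hsub i j x hj)
  · intro i i' hii' x hx hx'
    obtain ⟨j, hj⟩ := (hmem i x).1 hx
    obtain ⟨j', hj'⟩ := (hmem i' x).1 hx'
    exact hdisj (i := ⟨i, j⟩) (j := ⟨i', j'⟩) (fun h => hii' (congrArg Sigma.fst h))
      (hsub i j x hj) (hsub i' j' x hj')
  · intro i j
    simp only [C]
    split_ifs <;> simp
  · intro i j hj
    simp only [C]
    rw [if_neg (by omega)]

end Assembly

variable [Fintype V] {ε' : ℝ}

lemma exists_arc_of_not_satisfiesEC_s11 (hEC : ¬ SatisfiesEC A ε') {U₁ U₂ : Set V}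
    (h₁ : (1/2 - ε') * Fintype.card V ≤ (U₁.ncard : ℝ))
    (h₂ : (1/2 - ε') * Fintype.card V ≤ (U₂.ncard : ℝ)) :
    ∃ u ∈ U₁, ∃ v ∈ U₂, A u v := by
  by_contra! h
  have hempty : {p : V × V | p.1 ∈ U₁ ∧ p.2 ∈ U₂ ∧ A p.1 p.2} = ∅ :=
    Set.eq_empty_of_forall_notMem fun p hp => h p.1 hp.1 p.2 hp.2.1 hp.2.2
  exact hEC ⟨U₁, U₂, h₁, h₂, by simp [arcsCount, hempty]; positivity⟩

lemma exists_connector (hirr : ∀ v, ¬ A v v) (hEC : ¬ SatisfiesEC A ε') {δ : ℝ} {b d : V}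
    (hb : δ ≤ outDeg A b) (hd : δ ≤ inDeg A d) {B : Set V}
    (hB : (1/2 - ε') * Fintype.card V + B.ncard ≤ δ) :
    ∃ c, IsConnector A B b d c := by
  have large : ∀ S : Set V, δ ≤ S.ncard →
      (1/2 - ε') * Fintype.card V ≤ ((S \ B).ncard : ℝ) := by
    intro S hS
    have : (S.ncard : ℝ) ≤ (S \ B).ncard + B.ncard := by
      exact_mod_cast Set.ncard_le_ncard_sdiff_add_ncard S B
    linarith
  obtain ⟨u, ⟨hbu, huB⟩, v, ⟨hvd, hvB⟩, huv⟩ :=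
    exists_arc_of_not_satisfiesEC_s11 hEC (large {u | A b u} hb) (large {v | A v d} hd)
  exact ⟨(u, v), hbu, huv, hvd, huB, hvB, fun h : u = v => hirr u (h ▸ huv)⟩

lemma exists_pairwiseDisjoint_connectors (hirr : ∀ v, ¬ A v v) (hEC : ¬ SatisfiesEC A ε')
    {δ : ℝ} (hdeg : ∀ v, δ ≤ outDeg A v ∧ δ ≤ inDeg A v) {I : Type*} (b d : I → V)
    (B : Set V) (T : Finset I) (hT : (1/2 - ε') * Fintype.card V + B.ncard + 2 * T.card ≤ δ) :
    ∃ c : I → V × V, (∀ i ∈ T, IsConnector A B (b i) (d i) (c i)) ∧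
      (T : Set I).PairwiseDisjoint fun i => ({(c i).1, (c i).2} : Set V) := by
  induction T using Finset.induction_on with
  | empty => exact ⟨fun i => (b i, b i), by simp, by simp⟩
  | @insert a T ha ih =>
    rw [Finset.card_insert_of_notMem ha, Nat.cast_succ] at hT
    obtain ⟨c, hc, hcdisj⟩ := ih (by linarith)
    set used : Set V := ⋃ i ∈ T, {(c i).1, (c i).2}
    have hused : used.ncard ≤ 2 * T.card := calc
      used.ncard ≤ ∑ i ∈ T, ({(c i).1, (c i).2} : Set V).ncard := T.set_ncard_biUnion_le _
      _ ≤ ∑ _i ∈ T, 2 :=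
        Finset.sum_le_sum fun i _ => (Set.ncard_insert_le _ _).trans (by simp)
      _ = 2 * T.card := by rw [Finset.sum_const, smul_eq_mul, mul_comm]
    have hBused : ((B ∪ used).ncard : ℝ) ≤ B.ncard + 2 * T.card := by
      exact_mod_cast (Set.ncard_union_le B used).trans (by omega)
    obtain ⟨p, hp⟩ := exists_connector hirr hEC (hdeg (b a)).1 (hdeg (d a)).2
      (B := B ∪ used) (by linarith)
    have hc_eq : ∀ i ∈ T, update c a p i = c i := fun i hi =>
      update_of_ne (ne_of_mem_of_not_mem hi ha) _ _
    refine ⟨update c a p, fun i hi => ?_, ?_⟩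
    · rcases Finset.mem_insert.1 hi with rfl | hi
      · simpa using hp.mono Set.subset_union_left
      · simpa [hc_eq i hi] using hc i hi
    · rw [Finset.coe_insert, Set.pairwiseDisjoint_insert_of_notMem ha]
      refine ⟨hcdisj.mono_on fun i hi => by rw [hc_eq i hi], fun j hj => ?_⟩
      have hsub : ({(c j).1, (c j).2} : Set V) ⊆ B ∪ used :=
        (Set.subset_iUnion₂ (s := fun i (_ : i ∈ T) => ({(c i).1, (c i).2} : Set V)) j hj).trans
          Set.subset_union_right
      rw [update_self, hc_eq j hj]
      refine Set.disjoint_of_subset_right hsub ?_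
      rw [Set.disjoint_insert_left, Set.disjoint_singleton_left]
      exact ⟨hp.fst_notMem, hp.snd_notMem⟩

theorem exists_linkedPaths (hirr : ∀ v, ¬ A v v) (hEC : ¬ SatisfiesEC A ε') {δ : ℝ}
    (hdeg : ∀ v, δ ≤ outDeg A v ∧ δ ≤ inDeg A v) {W : Set V} {s : ℕ} {l : Fin s → ℕ}
    {Q : (i : Fin s) → Fin (l i) → V × V × V × V} (hQ : ∀ i j, IsFourPath A Wᶜ (Q i j))
    (hQdisj : ∀ p q : Σ i, Fin (l i), p ≠ q →
      ∀ x ∈ quadList (Q p.1 p.2), x ∉ quadList (Q q.1 q.2))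
    (hbudget : (1/2 - ε') * Fintype.card V + W.ncard + 6 * ∑ i, (l i : ℝ) ≤ δ) :
    ∃ (L : Fin s → List V) (C : (i : Fin s) → Fin (l i) → List V),
      (∀ i, (L i).IsChain A ∧ (L i).Nodup ∧ ∀ x ∈ L i, x ∉ W) ∧
      (∀ i i', i ≠ i' → ∀ x ∈ L i, x ∉ L i') ∧
      (∀ i, L i = (List.ofFn fun j => quadList (Q i j) ++ C i j).flatten) ∧
      (∀ i j, (C i j).length ≤ 2) ∧
      (∀ i (j : Fin (l i)), l i ≤ j + 1 → C i j = []) := by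
  set B : Set V := W ∪ ⋃ σ : Σ i, Fin (l i), ((quadList (Q σ.1 σ.2)).toFinset : Set V)
  have hcard : (Fintype.card (Σ i, Fin (l i)) : ℝ) = ∑ i, (l i : ℝ) := by simp
  have hB : (B.ncard : ℝ) ≤ W.ncard + 4 * ∑ i, (l i : ℝ) := by
    have h : B.ncard ≤ W.ncard + 4 * Fintype.card (Σ i, Fin (l i)) :=
      (Set.ncard_union_le W _).trans (Nat.add_le_add_left (ncard_iUnion_quadList_le _) _)
    rw [← hcard]
    exact_mod_cast h
  -- the connector leaving the last 4-path of a part aims at a junk target and is discarded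
  obtain ⟨c, hc, hcdisj⟩ := exists_pairwiseDisjoint_connectors hirr hEC hdeg
    (fun σ : Σ i, Fin (l i) => (Q σ.1 σ.2).2.2.2)
    (fun σ => if h : σ.2 + 1 < l σ.1 then (Q σ.1 ⟨σ.2 + 1, h⟩).1 else (Q σ.1 σ.2).1)
    B Finset.univ (by rw [Finset.card_univ, hcard]; linarith)
  exact exists_linkedPaths_of_connectors hQ hQdisj Set.subset_union_left
    (fun i j x hx => Set.mem_union_right _ (Set.mem_iUnion.2 ⟨⟨i, j⟩, by simpa using hx⟩))
    (fun σ => hc σ (Finset.mem_univ σ))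
    (by simpa [Set.PairwiseDisjoint, Set.pairwise_univ] using hcdisj)
    (fun σ h => dif_pos h)

end Linking

theorem linking_absorbers_into_paths_general (ε' : ℝ) (hε'0 : 0 < ε') :
    ∃ (γ : ℝ) (n₀ : ℕ), 0 < γ ∧
      ∀ n k : ℕ, n₀ ≤ n → (k : ℝ) ≤ γ * n →
        ∀ (V : Type) [Fintype V] (A : V → V → Prop),
          (∀ v, ¬ A v v) →
          Fintype.card V = n →
          (∀ v : V, (n : ℝ) / 2 + k ≤ (outDeg A v : ℝ) ∧
                    (n : ℝ) / 2 + k ≤ (inDeg A v : ℝ)) →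
          ¬ SatisfiesEC A ε' →
          ∀ W : Set V, W.ncard ≤ 2 * k →
            ∀ (s : ℕ) (l : Fin s → ℕ) (hl : ∀ i, 1 ≤ l i)
              (Q : (i : Fin s) → Fin (l i) → V × V × V × V),
              (∀ i j, IsFourPath A Wᶜ (Q i j)) →
              (∀ p q : Σ i : Fin s, Fin (l i), p ≠ q →
                ∀ x ∈ quadList (Q p.1 p.2), x ∉ quadList (Q q.1 q.2)) →
              ((∑ i, l i : ℝ)) ≤ γ * n →
              ∃ (L : Fin s → List V) (C : (i : Fin s) → Fin (l i) → List V),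
                (∀ i, (L i).Chain' A ∧ (L i).Nodup ∧ ∀ x ∈ L i, x ∉ W) ∧
                (∀ i i', i ≠ i' → ∀ x ∈ L i, x ∉ L i') ∧
                (∀ i, L i = (List.ofFn fun j => quadList (Q i j) ++ C i j).flatten) ∧
                (∀ i j, (C i j).length ≤ 2) ∧
                (∀ i, C i ⟨l i - 1, Nat.sub_lt (hl i) Nat.one_pos⟩ = []) := by
  refine ⟨ε' / 16, 0, by positivity, ?_⟩
  intro n k _ hk V _ A hirr hcard hdeg hEC W hW s l hl Q hQ hQdisj hsum
  subst hcard
  have hW' : (W.ncard : ℝ) ≤ 2 * k := by exact_mod_cast hW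
  obtain ⟨L, C, hL, hLdisj, hLC, hC, hClast⟩ :=
    exists_linkedPaths hirr hEC hdeg hQ hQdisj (by linarith)
  exact ⟨L, C, hL, hLdisj, hLC, hC, fun i => hClast i _ (by dsimp only; omega)⟩

/-- **Lemma (linking the 4-paths of a family).**  For every `ε' ∈ (0,1)` there are
`γ > 0` and `n₀` such that for all `n ≥ n₀` and `k ≤ γn`: let `D` be a digraph on `n`
vertices with `δ⁰(D) ≥ n/2 + k` not satisfying **EC** with parameter `ε'`, let `W` be a
set of at most `2k` vertices, and let `F` be a family of at most `γn` pairwise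
vertex-disjoint 4-paths of `D' = D - W`, partitioned into parts
`F i = {Q i 0, …, Q i (l i - 1)}`.  Then there are pairwise vertex-disjoint directed
paths `L 0, …, L (s-1)` in `D'` such that each `L i` is the concatenation
`Q i 0 ∘ P i 0 ∘ Q i 1 ∘ ⋯ ∘ P i (lᵢ - 2) ∘ Q i (lᵢ - 1)` where each connecting path
`P i j` has length at most 3; here `L i` is recorded as the flat list interleaving the
4-paths `Q i j` with the (at most two) internal vertices `C i j` of each `P i j`. -/
theorem linking_absorbers_into_paths (ε' : ℝ) (hε'0 : 0 < ε') (hε'1 : ε' < 1) :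
    ∃ (γ : ℝ) (n₀ : ℕ), 0 < γ ∧
      ∀ n k : ℕ, n₀ ≤ n → (k : ℝ) ≤ γ * n →
        ∀ (V : Type) [Fintype V] (A : V → V → Prop),
          (∀ v, ¬ A v v) →
          Fintype.card V = n →
          (∀ v : V, (n : ℝ) / 2 + k ≤ (outDeg A v : ℝ) ∧
                    (n : ℝ) / 2 + k ≤ (inDeg A v : ℝ)) →
          ¬ SatisfiesEC A ε' →
          ∀ W : Set V, W.ncard ≤ 2 * k →
            ∀ (s : ℕ) (l : Fin s → ℕ) (hl : ∀ i, 1 ≤ l i)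
              (Q : (i : Fin s) → Fin (l i) → V × V × V × V),
              (∀ i j, IsFourPath A Wᶜ (Q i j)) →
              (∀ p q : Σ i : Fin s, Fin (l i), p ≠ q →
                ∀ x ∈ quadList (Q p.1 p.2), x ∉ quadList (Q q.1 q.2)) →
              ((∑ i, l i : ℝ)) ≤ γ * n →
              ∃ (L : Fin s → List V) (C : (i : Fin s) → Fin (l i) → List V),
                (∀ i, (L i).Chain' A ∧ (L i).Nodup ∧ ∀ x ∈ L i, x ∉ W) ∧
                (∀ i i', i ≠ i' → ∀ x ∈ L i, x ∉ L i') ∧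
                (∀ i, L i = (List.ofFn fun j => quadList (Q i j) ++ C i j).flatten) ∧
                (∀ i j, (C i j).length ≤ 2) ∧
                (∀ i, C i ⟨l i - 1, Nat.sub_lt (hl i) Nat.one_pos⟩ = []) :=
  linking_absorbers_into_paths_general ε' hε'0
end

section
/- For every ε′ ∈ (0,1) and every η with 0 < η < ε′/3 there exist constants ν, τ with 0 < ν ≤ (ε′)² and ν ≪ τ ≪ η, and n₀, such that the following holds for all n ≥ n₀. Let D be a digraph on n + m vertices (m ≤ ηn/2) which does not satisfy the extremal condition EC with parameter ε′, and let D′ = D − U for a set U of m vertices with δ⁰(D′) ≥ (1/2 − η)n. Then D′ is a robust (ν, τ)-outexpander. -/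
open scoped Classical

/-!
Write `N = V(D')`, `ν = η²/4`, `τ = η/2` and `RN = RN⁺_ν(S)`. Double counting the arcs from `S`
into `N` gives `|S|(1/2 - η)n ≤ |RN||S| + νn²`, hence `|RN| ≥ |S| + νn` as soon as
`|S| ≤ (1/2 - 2η)n`. If `|S| ≥ (1/2 + η + ν)n`, the minimum in-degree leaves every vertex of `N`
at least `νn` in-neighbours in `S`, so `RN = N`. In the remaining range, a too small `RN` would
make `S` and `N \ RN` two sets of size about `n/2` with fewer than `νn²` arcs from the first to
the second, i.e. `D` would satisfy EC.
-/

section Counting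

variable {V : Type*} [Fintype V] (A : V → V → Prop)

theorem arcsCount_eq_sum_out (S T : Set V) :
    arcsCount A S T = ∑ y ∈ S.toFinset, {x ∈ T | A y x}.ncard := by
  rw [arcsCount, Set.ncard_eq_toFinset_card',
    show {p : V × V | p.1 ∈ S ∧ p.2 ∈ T ∧ A p.1 p.2}.toFinset
      = (S.toFinset ×ˢ T.toFinset).filter (fun p => A p.1 p.2) by ext; simp [and_assoc],
    Finset.card_filter, Finset.sum_product]
  refine Finset.sum_congr rfl fun y _ => ?_
  rw [← Finset.card_filter, Set.ncard_eq_toFinset_card']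
  congr 1; ext; simp

theorem arcsCount_eq_sum_in (S T : Set V) :
    arcsCount A S T = ∑ x ∈ T.toFinset, {y ∈ S | A y x}.ncard := by
  rw [arcsCount, Set.ncard_eq_toFinset_card',
    show {p : V × V | p.1 ∈ S ∧ p.2 ∈ T ∧ A p.1 p.2}.toFinset
      = (S.toFinset ×ˢ T.toFinset).filter (fun p => A p.1 p.2) by ext; simp [and_assoc],
    Finset.card_filter, Finset.sum_product_right]
  refine Finset.sum_congr rfl fun y _ => ?_
  rw [← Finset.card_filter, Set.ncard_eq_toFinset_card']
  congr 1; ext; simp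

theorem ncard_mul_le_arcsCount {S T : Set V} {d : ℝ}
    (h : ∀ y ∈ S, d ≤ {x ∈ T | A y x}.ncard) : S.ncard * d ≤ arcsCount A S T := by
  rw [arcsCount_eq_sum_out, Set.ncard_eq_toFinset_card', Nat.cast_sum, ← nsmul_eq_mul]
  exact Finset.card_nsmul_le_sum _ _ _ fun y hy => h y (Set.mem_toFinset.1 hy)

theorem arcsCount_le_ncard_mul {S T : Set V} {c : ℝ}
    (h : ∀ x ∈ T, ({y ∈ S | A y x}.ncard : ℝ) ≤ c) : arcsCount A S T ≤ T.ncard * c := by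
  rw [arcsCount_eq_sum_in, Set.ncard_eq_toFinset_card', Nat.cast_sum, ← nsmul_eq_mul]
  exact Finset.sum_le_card_nsmul _ _ _ fun x hx => h x (Set.mem_toFinset.1 hx)

theorem arcsCount_union_le (S T₁ T₂ : Set V) :
    arcsCount A S (T₁ ∪ T₂) ≤ arcsCount A S T₁ + arcsCount A S T₂ := by
  refine (Set.ncard_le_ncard ?_ (Set.toFinite _)).trans (Set.ncard_union_le _ _)
  rintro p ⟨hp, hT | hT, hA⟩
  exacts [Or.inl ⟨hp, hT, hA⟩, Or.inr ⟨hp, hT, hA⟩]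

end Counting

/-- `RN⁺_{ν, D[N]}(S)` for the digraph induced on `N`, with the threshold `t` standing for `νn`. -/
def robustOutNbhd {V : Type*} (A : V → V → Prop) (N S : Set V) (t : ℝ) : Set V :=
  {x ∈ N | t ≤ ({y ∈ S | A y x}.ncard : ℝ)}

section RobustOutNbhd

variable {V : Type*} (A : V → V → Prop) {N S : Set V} {t δ : ℝ}

theorem robustOutNbhd_subset : robustOutNbhd A N S t ⊆ N := fun _ hx => hx.1

theorem ncard_mul_le_robustOutNbhd [Fintype V] (ht : 0 ≤ t)
    (hδ : ∀ y ∈ S, δ ≤ ({x ∈ N | A y x}.ncard : ℝ)) :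
    S.ncard * δ ≤ (robustOutNbhd A N S t).ncard * S.ncard + N.ncard * t := by
  set R := robustOutNbhd A N S t
  calc S.ncard * δ ≤ arcsCount A S N := ncard_mul_le_arcsCount A hδ
    _ ≤ arcsCount A S R + arcsCount A S (N \ R) := by
      have h := arcsCount_union_le A S R (N \ R)
      rw [Set.union_sdiff_cancel (robustOutNbhd_subset A)] at h
      exact_mod_cast h
    _ ≤ R.ncard * S.ncard + (N \ R).ncard * t := by
      refine add_le_add (arcsCount_le_ncard_mul A fun x _ => ?_)
        (arcsCount_le_ncard_mul A fun x hx => (not_le.1 fun h => hx.2 ⟨hx.1, h⟩).le)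
      exact_mod_cast Set.ncard_le_ncard (Set.sep_subset _ _)
    _ ≤ R.ncard * S.ncard + N.ncard * t := by
      have hW : (N \ R).ncard ≤ N.ncard := Set.ncard_le_ncard Set.sdiff_subset
      gcongr

theorem robustOutNbhd_eq_self [Finite V] (hSN : S ⊆ N)
    (hδ : ∀ x ∈ N, δ ≤ ({y ∈ N | A y x}.ncard : ℝ)) (ht : t + N.ncard ≤ δ + S.ncard) :
    robustOutNbhd A N S t = N := by
  refine (robustOutNbhd_subset A).antisymm fun x hx => ⟨hx, ?_⟩
  have hsplit : {y ∈ N | A y x} ⊆ {y ∈ S | A y x} ∪ (N \ S) := fun y hy => by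
    by_cases hyS : y ∈ S
    exacts [Or.inl ⟨hyS, hy.2⟩, Or.inr ⟨hy.1, hyS⟩]
  have hle : ({y ∈ N | A y x}.ncard : ℝ) ≤ {y ∈ S | A y x}.ncard + (N \ S).ncard := by
    exact_mod_cast (Set.ncard_le_ncard hsplit).trans (Set.ncard_union_le _ _)
  have hdiff : ((N \ S).ncard : ℝ) + S.ncard = N.ncard := by
    exact_mod_cast Set.ncard_sdiff_add_ncard_of_subset hSN
  linarith [hδ x hx]

end RobustOutNbhd

section Stability

variable {V : Type*} [Fintype V] {A : V → V → Prop} {N S : Set V} {n : ℕ} {ε' η : ℝ}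

theorem le_ncard_robustOutNbhd_of_small (hη : 0 < η) (hN : N.ncard = n)
    (hδ : ∀ y ∈ S, (1/2 - η) * n ≤ ({x ∈ N | A y x}.ncard : ℝ))
    (hSl : η / 2 * n < S.ncard) (hSu : (S.ncard : ℝ) ≤ (1/2 - 2 * η) * n) :
    S.ncard + η^2/4 * n ≤ (robustOutNbhd A N S (η^2/4 * n)).ncard := by
  have hcount := ncard_mul_le_robustOutNbhd A (t := η^2/4 * n) (by positivity) hδ
  rw [hN] at hcount
  set s : ℝ := (S.ncard : ℝ)
  have hs : 0 < s := lt_of_le_of_lt (by positivity) hSl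
  have hmargin : 0 ≤ (n : ℝ) * η * (s - η * s / 4 - η * n / 4) := by
    have : 0 ≤ s - η * s / 4 - η * n / 4 := by nlinarith
    positivity
  refine le_of_mul_le_mul_right ?_ hs
  nlinarith [mul_le_mul_of_nonneg_left hSu hs.le, hmargin]

theorem le_ncard_robustOutNbhd_of_large (hη : 0 < η) (hN : N.ncard = n)
    (hSN : S ⊆ N) (hδ : ∀ x ∈ N, (1/2 - η) * n ≤ ({y ∈ N | A y x}.ncard : ℝ))
    (hSl : (1/2 + η + η^2/4) * n ≤ S.ncard) (hSu : (S.ncard : ℝ) < (1 - η/2) * n) :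
    S.ncard + η^2/4 * n ≤ (robustOutNbhd A N S (η^2/4 * n)).ncard := by
  rw [robustOutNbhd_eq_self A hSN hδ (by rw [hN]; linarith), hN]
  nlinarith

theorem satisfiesEC_of_ncard_robustOutNbhd_lt (hη : 0 < η) (hε' : 3 * η < ε')
    (hN : N.ncard = n) (hV : (Fintype.card V : ℝ) ≤ (1 + η/2) * n)
    (hSl : (1/2 - 2 * η) * n < S.ncard) (hSu : (S.ncard : ℝ) < (1/2 + η + η^2/4) * n)
    (hR : ((robustOutNbhd A N S (η^2/4 * n)).ncard : ℝ) < S.ncard + η^2/4 * n) :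
    SatisfiesEC A ε' := by
  set R := robustOutNbhd A N S (η^2/4 * n)
  have hWR : ((N \ R).ncard : ℝ) + R.ncard = n := by
    exact_mod_cast hN ▸ Set.ncard_sdiff_add_ncard_of_subset (robustOutNbhd_subset A)
  have harcs : (arcsCount A S (N \ R) : ℝ) ≤ (N \ R).ncard * (η^2/4 * n) :=
    arcsCount_le_ncard_mul A fun x hx => (not_le.1 fun h => hx.2 ⟨hx.1, h⟩).le
  have hnV : (n : ℝ) ≤ Fintype.card V := by
    rw [← hN, ← Nat.card_eq_fintype_card]; exact_mod_cast Set.ncard_le_card N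
  have hε'0 : 0 < ε' := by linarith
  have hεV : ε' * n ≤ ε' * Fintype.card V := by gcongr
  refine ⟨S, N \ R, by nlinarith, by nlinarith, ?_⟩
  have hW : ((N \ R).ncard : ℝ) ≤ n := by linarith [(R.ncard.cast_nonneg : (0 : ℝ) ≤ R.ncard)]
  have hνε : η^2/4 ≤ ε'^2 := by nlinarith
  calc (arcsCount A S (N \ R) : ℝ) ≤ n * (η^2/4 * n) := harcs.trans (by gcongr)
    _ = η^2/4 * n^2 := by ring
    _ ≤ ε'^2 * n^2 := by gcongr
    _ ≤ (ε' * Fintype.card V)^2 := by rw [← mul_pow]; gcongr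

theorem le_ncard_robustOutNbhd_of_not_satisfiesEC (hη : 0 < η) (hε' : 3 * η < ε')
    (hEC : ¬ SatisfiesEC A ε') (hN : N.ncard = n) (hV : (Fintype.card V : ℝ) ≤ (1 + η/2) * n)
    (hSN : S ⊆ N)
    (hδ : ∀ v ∈ N, (1/2 - η) * n ≤ ({u ∈ N | A v u}.ncard : ℝ) ∧
      (1/2 - η) * n ≤ ({u ∈ N | A u v}.ncard : ℝ))
    (hSl : η / 2 * n < S.ncard) (hSu : (S.ncard : ℝ) < (1 - η/2) * n) :
    S.ncard + η^2/4 * n ≤ (robustOutNbhd A N S (η^2/4 * n)).ncard := by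
  rcases le_or_gt (S.ncard : ℝ) ((1/2 - 2 * η) * n) with hsmall | hnotsmall
  · exact le_ncard_robustOutNbhd_of_small hη hN (fun y hy => (hδ y (hSN hy)).1) hSl hsmall
  rcases le_or_gt ((1/2 + η + η^2/4) * n) (S.ncard : ℝ) with hlarge | hnotlarge
  · exact le_ncard_robustOutNbhd_of_large hη hN hSN (fun x hx => (hδ x hx).2) hlarge hSu
  · exact not_lt.1 fun hR =>
      hEC (satisfiesEC_of_ncard_robustOutNbhd_lt hη hε' hN hV hnotsmall hnotlarge hR)

end Stability

theorem stable_implies_robust_outexpander_general (ε' η : ℝ)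
    (hε'1 : ε' < 1) (hη0 : 0 < η) (hη : η < ε' / 3) :
    ∃ (ν τ : ℝ) (n₀ : ℕ), 0 < ν ∧ ν ≤ ε'^2 ∧ ν < τ ∧ τ < η ∧
      ∀ n : ℕ, n₀ ≤ n →
        ∀ (V : Type) [Fintype V] (A : V → V → Prop) (U : Set V),
          (∀ v, ¬ A v v) →
          Fintype.card V = n + U.ncard →
          (U.ncard : ℝ) ≤ η * n / 2 →
          ¬ SatisfiesEC A ε' →
          (∀ v ∈ Uᶜ, (1/2 - η) * n ≤ (({u ∈ Uᶜ | A v u}).ncard : ℝ) ∧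
                     (1/2 - η) * n ≤ (({u ∈ Uᶜ | A u v}).ncard : ℝ)) →
          ∀ S : Set V, S ⊆ Uᶜ → τ * n < (S.ncard : ℝ) → (S.ncard : ℝ) < (1 - τ) * n →
            (S.ncard : ℝ) + ν * n ≤
              (({x ∈ Uᶜ | ν * n ≤ (({y ∈ S | A y x}).ncard : ℝ)}).ncard : ℝ) := by
  have hη2 : η < 2 := by linarith
  refine ⟨η^2/4, η/2, 0, by positivity, by nlinarith, by nlinarith, by linarith, ?_⟩
  intro n _ V _ A U _ hcard hU hEC hδ S hSU hSl hSu
  have hN : Uᶜ.ncard = n := by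
    have := Set.ncard_add_ncard_compl U
    rw [Nat.card_eq_fintype_card] at this
    omega
  have hV : (Fintype.card V : ℝ) ≤ (1 + η/2) * n := by rw [hcard]; push_cast; linarith
  exact le_ncard_robustOutNbhd_of_not_satisfiesEC hη0 (by linarith) hEC hN hV hSU hδ hSl hSu

/-- **Lemma (stability implies robust outexpansion).**  For every `ε' ∈ (0,1)` and every
`η` with `0 < η < ε'/3` there are constants `ν, τ` with `0 < ν ≤ (ε')²`, `ν < τ < η`,
and `n₀`, such that for all `n ≥ n₀`: if `D` is a digraph on `n + m` vertices
(`m ≤ ηn/2`) not satisfying **EC** with parameter `ε'`, and `D' = D - U` for an `m`-set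
`U` with `δ⁰(D') ≥ (1/2 - η)n`, then `D'` is a robust `(ν, τ)`-outexpander: for every
`S ⊆ V(D')` with `τn < |S| < (1-τ)n`, the set of vertices of `D'` having at least `νn`
in-neighbours in `S` has size at least `|S| + νn`. -/
theorem stable_implies_robust_outexpander (ε' η : ℝ)
    (hε'0 : 0 < ε') (hε'1 : ε' < 1) (hη0 : 0 < η) (hη : η < ε' / 3) :
    ∃ (ν τ : ℝ) (n₀ : ℕ), 0 < ν ∧ ν ≤ ε'^2 ∧ ν < τ ∧ τ < η ∧
      ∀ n : ℕ, n₀ ≤ n →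
        ∀ (V : Type) [Fintype V] (A : V → V → Prop) (U : Set V),
          (∀ v, ¬ A v v) →
          Fintype.card V = n + U.ncard →
          (U.ncard : ℝ) ≤ η * n / 2 →
          ¬ SatisfiesEC A ε' →
          (∀ v ∈ Uᶜ, (1/2 - η) * n ≤ (({u ∈ Uᶜ | A v u}).ncard : ℝ) ∧
                     (1/2 - η) * n ≤ (({u ∈ Uᶜ | A u v}).ncard : ℝ)) →
          ∀ S : Set V, S ⊆ Uᶜ → τ * n < (S.ncard : ℝ) → (S.ncard : ℝ) < (1 - τ) * n →
            (S.ncard : ℝ) + ν * n ≤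
              (({x ∈ Uᶜ | ν * n ≤ (({y ∈ S | A y x}).ncard : ℝ)}).ncard : ℝ) :=
  stable_implies_robust_outexpander_general ε' η hε'1 hη0 hη
end

section
/- Let H be a digraph with k arcs. Suppose constants satisfy 1/C ≪ ε′ ≪ ε ≪ 1. If D is a digraph on n ≥ Ck vertices with minimum semi-degree δ⁰(D) ≥ n/2 + k which satisfies the extremal condition EC with parameter ε′, then D belongs to Extremal Case 1 (EC1) with parameter ε. -/
open scoped Classical

/-- **Extremal Case 1 (EC1)** with parameter `ε`: the vertex set is partitioned into
`W 0, W 1, W 2, W 3` (corresponding to `W₁, W₂, W₃, W₄` of the paper) with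
`||W₁| - |W₃||, ||W₂| - |W₄|| ≤ εn`, such that (A) each `(W i, W (i+1))` (indices mod 4)
is `ε`-almost one-way complete, (B) `W₁` and `W₃` are `ε`-almost complete, and
(C) `(W₂, W₄)` is `ε`-almost complete bipartite. -/
def InEC1 {V : Type*} [Fintype V] (A : V → V → Prop) (ε : ℝ) : Prop :=
  ∃ W : Fin 4 → Set V,
    (∀ i j, i ≠ j → Disjoint (W i) (W j)) ∧
    (⋃ i, W i) = Set.univ ∧
    |((W 0).ncard : ℝ) - ((W 2).ncard : ℝ)| ≤ ε * Fintype.card V ∧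
    |((W 1).ncard : ℝ) - ((W 3).ncard : ℝ)| ≤ ε * Fintype.card V ∧
    (∀ i : Fin 4,
      ((W i).ncard : ℝ) * ((W (i + 1)).ncard : ℝ) - ε * (Fintype.card V : ℝ)^2 ≤
        (arcsCount A (W i) (W (i + 1)) : ℝ)) ∧
    (∀ i : Fin 4, i = 0 ∨ i = 2 →
      ((W i).ncard : ℝ)^2 - ε * (Fintype.card V : ℝ)^2 ≤ (arcsCount A (W i) (W i) : ℝ)) ∧
    (∀ i : Fin 4, i = 1 ∨ i = 3 →
      ((W i).ncard : ℝ) * ((W (i + 2)).ncard : ℝ) - ε * (Fintype.card V : ℝ)^2 ≤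
        (arcsCount A (W i) (W (i + 2)) : ℝ))


/-! Let `U₁, U₂` witness EC. Every vertex of `U₁` has at least `n/2` out-neighbours and almost
no arc goes from `U₁` to `U₂`, so `|U₂| ≤ n/2 + ε'n`; dually `|U₁| ≤ n/2 + ε'n`. Moreover a vertex
of `U₁` sends almost all of its out-arcs outside `U₂`, so every `S ⊆ U₁` is almost completely
joined to every `T` disjoint from `U₂`; dually every `S` disjoint from `U₁` is almost completely
joined to every `T ⊆ U₂`. The Venn cells `U₂ \ U₁, U₁ ∩ U₂, U₁ \ U₂, V \ (U₁ ∪ U₂)` then form an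
EC1 partition: each pair of cells required there is of one of these two kinds. -/

section Counting

variable {V : Type*} (A : V → V → Prop)

lemma outDeg_flip (v : V) : outDeg (flip A) v = inDeg A v := rfl

lemma arcsCount_flip (S T : Set V) : arcsCount (flip A) S T = arcsCount A T S := by
  have : {p : V × V | p.1 ∈ S ∧ p.2 ∈ T ∧ flip A p.1 p.2} =
      Prod.swap ⁻¹' {p : V × V | p.1 ∈ T ∧ p.2 ∈ S ∧ A p.1 p.2} := by
    ext; simp only [flip, Set.mem_ofPred_eq, Set.mem_preimage, Prod.fst_swap, Prod.snd_swap]; tauto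
  rw [arcsCount, arcsCount, this, Set.ncard_preimage_of_injective_subset_range
    Prod.swap_injective (Prod.swap_surjective.range_eq ▸ Set.subset_univ _)]

variable [Finite V]

lemma arcsCount_mono_left {S S' : Set V} (T : Set V) (h : S ⊆ S') :
    arcsCount A S T ≤ arcsCount A S' T :=
  Set.ncard_le_ncard (fun _ hp => ⟨h hp.1, hp.2⟩)

lemma arcsCount_union_right (S : Set V) {T U : Set V} (h : Disjoint T U) :
    arcsCount A S (T ∪ U) = arcsCount A S T + arcsCount A S U := by
  rw [arcsCount, arcsCount, arcsCount, ← Set.ncard_union_eq]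
  · congr 1; ext; simp only [Set.mem_ofPred_eq, Set.mem_union]; tauto
  · exact Set.disjoint_left.2 fun _ hT hU => h.ne_of_mem hT.2.1 hU.2.1 rfl

end Counting

section Degrees

variable {V : Type*} [Fintype V] (A : V → V → Prop)

lemma ncard_le_fintype_card (S : Set V) : S.ncard ≤ Fintype.card V :=
  Nat.card_eq_fintype_card (α := V) ▸ S.ncard_le_card

lemma arcsCount_eq_sum (S T : Set V) :
    arcsCount A S T = ∑ v ∈ S.toFinset, {u ∈ T | A v u}.ncard := by
  have : {p : V × V | p.1 ∈ S ∧ p.2 ∈ T ∧ A p.1 p.2} =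
      ↑{p ∈ S.toFinset ×ˢ T.toFinset | A p.1 p.2} := by
    ext; simp [and_assoc]
  rw [arcsCount, this, Set.ncard_coe_finset, Finset.card_filter, Finset.sum_product]
  refine Finset.sum_congr rfl fun v _ => ?_
  rw [← Finset.card_filter, ← Set.ncard_coe_finset]
  congr 1; ext; simp

lemma outDeg_add_ncard_le (v : V) (T : Set V) :
    outDeg A v + T.ncard ≤ {u ∈ T | A v u}.ncard + Fintype.card V := by
  have hinter : {u ∈ T | A v u} = {u | A v u} ∩ T := by ext; simp [and_comm]
  rw [outDeg, hinter, ← Set.ncard_union_add_ncard_inter, add_comm]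
  gcongr
  exact ncard_le_fintype_card _

lemma ncard_mul_sub_le_arcsCount {d : ℝ} (hdeg : ∀ v, d ≤ outDeg A v) (S T : Set V) :
    S.ncard * (d + T.ncard - Fintype.card V) ≤ arcsCount A S T := by
  rw [arcsCount_eq_sum, Set.ncard_eq_toFinset_card', ← nsmul_eq_mul]
  push_cast
  refine Finset.card_nsmul_le_sum _ _ _ fun v _ => ?_
  have hcount : (outDeg A v : ℝ) + T.ncard ≤ {u ∈ T | A v u}.ncard + Fintype.card V := by
    exact_mod_cast outDeg_add_ncard_le A v T
  linarith [hdeg v]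

end Degrees

section SparsePair

variable {V : Type*} [Fintype V] {A : V → V → Prop} {U₁ U₂ : Set V} {ε' : ℝ}

lemma ncard_le_half_add (hout : ∀ v, (Fintype.card V : ℝ) / 2 ≤ outDeg A v)
    (hε'₀ : 0 ≤ ε') (hε'₁ : ε' ≤ 1 / 4)
    (hU₁ : (1 / 2 - ε') * Fintype.card V ≤ (U₁.ncard : ℝ))
    (harc : (arcsCount A U₁ U₂ : ℝ) ≤ (ε' * Fintype.card V) ^ 2) :
    (U₂.ncard : ℝ) ≤ Fintype.card V / 2 + ε' * Fintype.card V := by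
  have hdeg := ncard_mul_sub_le_arcsCount A hout U₁ U₂
  have hU₂n : (U₂.ncard : ℝ) ≤ Fintype.card V := by exact_mod_cast ncard_le_fintype_card U₂
  set n : ℝ := (Fintype.card V : ℝ)
  by_contra! hbig
  have hn : 0 < n := by nlinarith
  nlinarith [mul_le_mul_of_nonneg_right (show n / 4 ≤ U₁.ncard by nlinarith)
    (show 0 ≤ (U₂.ncard : ℝ) - n / 2 by nlinarith), mul_pos hn (sub_pos.2 hbig),
    mul_nonneg (mul_nonneg hε'₀ (sub_nonneg.2 hε'₁)) (sq_nonneg n)]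

lemma ncard_mul_ncard_sub_le_arcsCount (hout : ∀ v, (Fintype.card V : ℝ) / 2 ≤ outDeg A v)
    (hε'₀ : 0 ≤ ε') (hε'₁ : ε' ≤ 1)
    (hU₂ : (1 / 2 - ε') * Fintype.card V ≤ (U₂.ncard : ℝ))
    (harc : (arcsCount A U₁ U₂ : ℝ) ≤ (ε' * Fintype.card V) ^ 2)
    {S T : Set V} (hS : S ⊆ U₁) (hT : Disjoint T U₂) :
    (S.ncard : ℝ) * T.ncard - 2 * ε' * Fintype.card V ^ 2 ≤ arcsCount A S T := by
  have hSn : (S.ncard : ℝ) ≤ Fintype.card V := by exact_mod_cast ncard_le_fintype_card S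
  set n : ℝ := (Fintype.card V : ℝ)
  have hdeg := ncard_mul_sub_le_arcsCount A hout S (T ∪ U₂)
  rw [Set.ncard_union_eq hT, arcsCount_union_right A S hT] at hdeg
  push_cast at hdeg
  have hSU₂ : (arcsCount A S U₂ : ℝ) ≤ arcsCount A U₁ U₂ := by
    exact_mod_cast arcsCount_mono_left A U₂ hS
  nlinarith [mul_le_mul_of_nonneg_left (show -(ε' * n) ≤ U₂.ncard - n / 2 by linarith)
    (Nat.cast_nonneg (α := ℝ) S.ncard), mul_nonneg (sub_nonneg.2 hSn) hε'₀,
    mul_nonneg (mul_nonneg hε'₀ (sub_nonneg.2 hε'₁)) (sq_nonneg n)]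

lemma ncard_mul_ncard_sub_le_arcsCount_of_crossing
    (hout : ∀ v, (Fintype.card V : ℝ) / 2 ≤ outDeg A v)
    (hin : ∀ v, (Fintype.card V : ℝ) / 2 ≤ inDeg A v)
    (hε'₀ : 0 ≤ ε') (hε'₁ : ε' ≤ 1)
    (hU₁ : (1 / 2 - ε') * Fintype.card V ≤ (U₁.ncard : ℝ))
    (hU₂ : (1 / 2 - ε') * Fintype.card V ≤ (U₂.ncard : ℝ))
    (harc : (arcsCount A U₁ U₂ : ℝ) ≤ (ε' * Fintype.card V) ^ 2)
    {S T : Set V} (h : S ⊆ U₁ ∧ Disjoint T U₂ ∨ Disjoint S U₁ ∧ T ⊆ U₂) :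
    (S.ncard : ℝ) * T.ncard - 2 * ε' * Fintype.card V ^ 2 ≤ arcsCount A S T := by
  rcases h with ⟨hS, hT⟩ | ⟨hS, hT⟩
  · exact ncard_mul_ncard_sub_le_arcsCount hout hε'₀ hε'₁ hU₂ harc hS hT
  · have := ncard_mul_ncard_sub_le_arcsCount (A := flip A) (by simpa only [outDeg_flip])
      hε'₀ hε'₁ hU₁ (by rwa [arcsCount_flip]) hT hS
    rw [arcsCount_flip] at this
    linarith

end SparsePair

section Venn

variable {V : Type*} (U₁ U₂ : Set V)

def vennCells : Fin 4 → Set V := ![U₂ \ U₁, U₁ ∩ U₂, U₁ \ U₂, (U₁ ∪ U₂)ᶜ]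

lemma vennCells_disjoint : ∀ i j, i ≠ j → Disjoint (vennCells U₁ U₂ i) (vennCells U₁ U₂ j) := by
  intro i j hij
  fin_cases i <;> fin_cases j <;> simp_all [vennCells, Set.disjoint_left]

lemma iUnion_vennCells : ⋃ i, vennCells U₁ U₂ i = Set.univ := by
  simp only [Set.eq_univ_iff_forall, Set.mem_iUnion, Fin.exists_fin_succ]
  intro x
  by_cases x ∈ U₁ <;> by_cases x ∈ U₂ <;> simp_all [vennCells]

lemma ncard_vennCells_zero_sub_two [Finite V] :
    ((vennCells U₁ U₂ 0).ncard : ℝ) - (vennCells U₁ U₂ 2).ncard = U₂.ncard - U₁.ncard := by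
  have h₁ := Set.ncard_inter_add_ncard_sdiff_eq_ncard U₁ U₂
  have h₂ := Set.ncard_inter_add_ncard_sdiff_eq_ncard U₂ U₁
  rw [Set.inter_comm] at h₂
  simp only [vennCells, Matrix.cons_val]
  rw [← h₁, ← h₂]
  push_cast
  ring

lemma ncard_vennCells_one_sub_three [Fintype V] :
    ((vennCells U₁ U₂ 1).ncard : ℝ) - (vennCells U₁ U₂ 3).ncard =
      U₁.ncard + U₂.ncard - Fintype.card V := by
  have h₁ := Set.ncard_union_add_ncard_inter U₁ U₂
  have h₂ := Set.ncard_add_ncard_compl (U₁ ∪ U₂)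
  rw [Nat.card_eq_fintype_card] at h₂
  simp only [vennCells, Matrix.cons_val]
  rw [← Nat.cast_add, ← h₁, ← h₂]
  push_cast
  ring

end Venn

theorem inEC1_of_satisfiesEC {V : Type*} [Fintype V] {A : V → V → Prop} {ε ε' : ℝ}
    (hout : ∀ v, (Fintype.card V : ℝ) / 2 ≤ outDeg A v)
    (hin : ∀ v, (Fintype.card V : ℝ) / 2 ≤ inDeg A v)
    (hε'₀ : 0 ≤ ε') (hε'₁ : ε' ≤ 1 / 4) (hε : 2 * ε' ≤ ε) (hEC : SatisfiesEC A ε') :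
    InEC1 A ε := by
  obtain ⟨U₁, U₂, hU₁, hU₂, harc⟩ := hEC
  have hU₂le := ncard_le_half_add hout hε'₀ hε'₁ hU₁ harc
  have hU₁le := ncard_le_half_add (A := flip A) (by simpa only [outDeg_flip]) hε'₀ hε'₁ hU₂
    (by rwa [arcsCount_flip])
  have hεn : 2 * ε' * Fintype.card V ≤ ε * Fintype.card V := by gcongr
  have hcross : ∀ S T : Set V, S ⊆ U₁ ∧ Disjoint T U₂ ∨ Disjoint S U₁ ∧ T ⊆ U₂ →
      (S.ncard : ℝ) * T.ncard - ε * Fintype.card V ^ 2 ≤ arcsCount A S T := by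
    intro S T h
    have := ncard_mul_ncard_sub_le_arcsCount_of_crossing hout hin hε'₀ (by linarith) hU₁ hU₂
      harc h
    have : 2 * ε' * (Fintype.card V : ℝ) ^ 2 ≤ ε * Fintype.card V ^ 2 := by gcongr
    linarith
  refine ⟨vennCells U₁ U₂, vennCells_disjoint U₁ U₂, iUnion_vennCells U₁ U₂, ?_, ?_, ?_, ?_, ?_⟩
  · rw [ncard_vennCells_zero_sub_two, abs_le]
    constructor <;> linarith
  · rw [ncard_vennCells_one_sub_three, abs_le]
    constructor <;> linarith
  · intro i
    apply hcross
    fin_cases i <;> simp [vennCells, Set.disjoint_left, Set.subset_def] <;> tauto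
  · rintro i (rfl | rfl) <;> rw [sq] <;> apply hcross <;>
      simp [vennCells, Set.disjoint_left, Set.subset_def] <;> tauto
  · rintro i (rfl | rfl) <;> apply hcross <;>
      simp [vennCells, Set.disjoint_left, Set.subset_def] <;> tauto

/-- **Lemma (EC implies EC1).**  Suppose `1/C ≪ ε' ≪ ε ≪ 1`.  If a digraph `D` on
`n ≥ Ck` vertices with `δ⁰(D) ≥ n/2 + k` satisfies the extremal condition **EC** with
parameter `ε'`, then `D` belongs to Extremal Case 1 (**EC1**) with parameter `ε`. -/
theorem ec_implies_ec1 :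
    ∃ ε₀ : ℝ, 0 < ε₀ ∧ ε₀ < 1 ∧
      ∀ ε : ℝ, 0 < ε → ε ≤ ε₀ →
        ∃ ε'₀ : ℝ, 0 < ε'₀ ∧
          ∀ ε' : ℝ, 0 < ε' → ε' ≤ ε'₀ →
            ∃ C₀ : ℕ, ∀ C : ℕ, C₀ ≤ C →
              ∀ (k : ℕ) (V : Type) [Fintype V] (A : V → V → Prop),
                (∀ v, ¬ A v v) →
                C * k ≤ Fintype.card V →
                (∀ v : V, (Fintype.card V : ℝ) / 2 + k ≤ (outDeg A v : ℝ) ∧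
                          (Fintype.card V : ℝ) / 2 + k ≤ (inDeg A v : ℝ)) →
                SatisfiesEC A ε' →
                InEC1 A ε := by
  refine ⟨1 / 2, by norm_num, by norm_num, fun ε hε hε₀ => ⟨ε / 2, by positivity,
    fun ε' hε' hε'ε => ⟨0, fun C _ k V _ A _ _ hdeg hEC => ?_⟩⟩⟩
  have hk : (0 : ℝ) ≤ k := k.cast_nonneg
  exact inEC1_of_satisfiesEC (fun v => by linarith [(hdeg v).1]) (fun v => by linarith [(hdeg v).2])
    hε'.le (by linarith) (by linarith) hEC
end
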